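/- arXiv:2407.13015 — 5 statements merged into one kernel-verified Lean document; each statement's English description precedes it below -/
import Mathlib

section
/- Let f(z) = Σ a_n z^n be a power series with rational coefficients converging on the open ball B(0,ρ) ⊆ ℂ_p, where ρ ∈ (0,∞]. If α ∈ B(0,ρ) is algebraic over ℚ with [ℚ_p(α):ℚ_p] > 1 and f(α) is algebraic over ℚ, then for every α' algebraic over ℚ that is a ℚ_p-conjugate of α, f(α') is also algebraic over ℚ (indeed f(α') is an algebraic conjugate of f(α)). -/
/-!
The partial sums of `f(α)` lie in `ℚ_p(α)`, a finite-dimensional and hence closed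
`ℚ_p`-subspace of `ℂ_p`, so `f(α) ∈ ℚ_p(α)`. The `ℚ_p`-embedding `σ : ℚ_p(α) → ℂ_p` with
`σ α = α'` is a linear map on a finite-dimensional space, hence continuous; as it fixes the
rational coefficients it carries `f(α)` to `f(α')`. Being a field embedding it fixes `ℚ`, so
`f(α') = σ (f(α))` is algebraic with the same minimal polynomial over `ℚ` as `f(α)`.
-/

open scoped ENNReal
open IntermediateField

namespace IntermediateField

theorem exists_algHom_adjoin_simple_gen_eq {K L : Type*} [Field K] [Field L] [Algebra K L]
    {α β : L} (hα : IsIntegral K α) (hβ : Polynomial.aeval β (minpoly K α) = 0) :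
    ∃ σ : K⟮α⟯ →ₐ[K] L, σ (AdjoinSimple.gen K α) = β :=
  ⟨(algHomAdjoinIntegralEquiv K hα).symm ⟨β, Polynomial.mem_aroots.mpr ⟨minpoly.ne_zero hα, hβ⟩⟩,
    algHomAdjoinIntegralEquiv_symm_apply_gen K hα _⟩

variable {K L : Type*} [NontriviallyNormedField K] [CompleteSpace K] [NormedField L]
  [NormedAlgebra K L]

theorem isClosed_of_finiteDimensional (E : IntermediateField K L) [FiniteDimensional K E] :
    IsClosed (E : Set L) :=
  Submodule.closed_of_finiteDimensional (Subalgebra.toSubmodule E.toSubalgebra)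

theorem exists_coe_eq_and_hasSum_map {E : IntermediateField K L} [FiniteDimensional K E]
    (σ : E →ₗ[K] L) {ι : Type*} {g : ι → E} {s : L} (hs : HasSum (fun i => (g i : L)) s) :
    ∃ x : E, (x : L) = s ∧ HasSum (fun i => σ (g i)) (σ x) := by
  have hsE : s ∈ E :=
    E.isClosed_of_finiteDimensional.mem_of_tendsto hs
      (Filter.Eventually.of_forall fun _ => sum_mem fun i _ => (g i).2)
  have hval : Topology.IsInducing E.val := Topology.IsInducing.subtypeVal
  have hgx : HasSum g ⟨s, hsE⟩ := (hval.hasSum_iff g _).mp hs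
  exact ⟨⟨s, hsE⟩, rfl, hgx.map σ σ.continuous_of_finiteDimensional⟩

end IntermediateField

namespace RingHom

variable {A B : Type*} [Field A] [CharZero A] [DivisionRing B] [CharZero B]

theorem isAlgebraic_rat_apply_iff (f : A →+* B) {x : A} :
    IsAlgebraic ℚ (f x) ↔ IsAlgebraic ℚ x :=
  isAlgebraic_algHom_iff f.toRatAlgHom f.injective

theorem minpoly_rat_apply (f : A →+* B) (x : A) : minpoly ℚ (f x) = minpoly ℚ x :=
  minpoly.algHom_eq f.toRatAlgHom f.injective x

end RingHom

theorem exceptional_set_closed_under_qp_conjugation_general {p : ℕ} [Fact p.Prime]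
    (Cp : Type) [NontriviallyNormedField Cp]
    [CharZero Cp] [Algebra ℚ_[p] Cp]
    (hisom : ∀ x : ℚ_[p], ‖algebraMap ℚ_[p] Cp x‖ = ‖x‖)
    (ρ : ℝ≥0∞) (a : ℕ → ℚ)
    (hconv : ∀ z : Cp, (‖z‖₊ : ℝ≥0∞) < ρ → Summable fun n => (a n : Cp) * z ^ n)
    (F : Cp → Cp) (hF : ∀ z : Cp, F z = ∑' n, (a n : Cp) * z ^ n)
    (α : Cp) (hαball : (‖α‖₊ : ℝ≥0∞) < ρ) (hαalg : IsAlgebraic ℚ α)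
    (hFα : IsAlgebraic ℚ (F α))
    (α' : Cp)
    (hconj : minpoly ℚ_[p] α' = minpoly ℚ_[p] α) :
    IsAlgebraic ℚ (F α') ∧ minpoly ℚ (F α') = minpoly ℚ (F α) := by
  let : NormedAlgebra ℚ_[p] Cp :=
    { ‹Algebra ℚ_[p] Cp› with norm_smul_le := fun c x => by rw [Algebra.smul_def, norm_mul, hisom] }
  have hαint : IsIntegral ℚ_[p] α := (hαalg.tower_top ℚ_[p]).isIntegral
  have := adjoin.finiteDimensional hαint
  obtain ⟨σ, hσ⟩ := exists_algHom_adjoin_simple_gen_eq hαint (hconj ▸ minpoly.aeval ℚ_[p] α')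
  obtain ⟨x, hxα, hxα'⟩ := exists_coe_eq_and_hasSum_map σ.toLinearMap
    (g := fun n => (a n : ℚ_[p]⟮α⟯) * AdjoinSimple.gen ℚ_[p] α ^ n)
    (by simpa [hF] using (hconv α hαball).hasSum)
  have hFα' : F α' = σ x := by
    rw [hF]
    simpa [hσ] using hxα'.tsum_eq
  rw [hF α, ← hxα] at hFα ⊢
  have hx : IsAlgebraic ℚ x := (ℚ_[p]⟮α⟯.val : ℚ_[p]⟮α⟯ →+* Cp).isAlgebraic_rat_apply_iff.mp hFα
  rw [hFα']
  exact ⟨(σ : ℚ_[p]⟮α⟯ →+* Cp).isAlgebraic_rat_apply_iff.mpr hx,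
    (RingHom.minpoly_rat_apply _ x).trans
      (RingHom.minpoly_rat_apply (ℚ_[p]⟮α⟯.val : ℚ_[p]⟮α⟯ →+* Cp) x).symm⟩

/-- If `f` is a power series with rational coefficients converging on `B(0,ρ) ⊆ ℂ_p`,
`α ∈ B(0,ρ)` is algebraic over `ℚ` with `[ℚ_p(α):ℚ_p] > 1` and `f(α)` is algebraic over `ℚ`,
then for every `α'` algebraic over `ℚ` which is a `ℚ_p`-conjugate of `α`, the value `f(α')`
is algebraic over `ℚ` as well; indeed it is an algebraic conjugate of `f(α)`. -/
theorem exceptional_set_closed_under_qp_conjugation {p : ℕ} [Fact p.Prime]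
    (Cp : Type) [NontriviallyNormedField Cp] [IsUltrametricDist Cp] [CompleteSpace Cp]
    [IsAlgClosed Cp] [CharZero Cp] [Algebra ℚ_[p] Cp]
    (hisom : ∀ x : ℚ_[p], ‖algebraMap ℚ_[p] Cp x‖ = ‖x‖)
    (hdense : Dense {x : Cp | IsAlgebraic ℚ_[p] x})
    (ρ : ℝ≥0∞) (hρ : 0 < ρ) (a : ℕ → ℚ)
    (hconv : ∀ z : Cp, (‖z‖₊ : ℝ≥0∞) < ρ → Summable fun n => (a n : Cp) * z ^ n)
    (F : Cp → Cp) (hF : ∀ z : Cp, F z = ∑' n, (a n : Cp) * z ^ n)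
    (α : Cp) (hαball : (‖α‖₊ : ℝ≥0∞) < ρ) (hαalg : IsAlgebraic ℚ α)
    (hdeg : 1 < (minpoly ℚ_[p] α).natDegree)
    (hFα : IsAlgebraic ℚ (F α))
    (α' : Cp) (hα'alg : IsAlgebraic ℚ α')
    (hconj : minpoly ℚ_[p] α' = minpoly ℚ_[p] α) :
    IsAlgebraic ℚ (F α') ∧ minpoly ℚ (F α') = minpoly ℚ (F α) :=
  exceptional_set_closed_under_qp_conjugation_general Cp hisom ρ a hconv F hF α hαball hαalg hFα α'
    hconj
end

section
/- Let 𝕂 be a subfield of ℂ_p and let f ∈ 𝕂[[z]] be a power series with radius of convergence ρ ∈ (0,∞] that is algebraic of degree n over ℂ_p[z] (i.e., n is the minimal total degree of a nonzero polynomial P(X,Y) ∈ ℂ_p[X,Y] with P(z, f(z)) = 0 for all z ∈ B(0,ρ)). Then f is algebraic of degree n over 𝕂[z]: there exists a nonzero polynomial P̄(X,Y) ∈ 𝕂[X,Y] of total degree n with P̄(z, f(z)) = 0 for all z ∈ B(0,ρ). -/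
open scoped ENNReal
open PowerSeries

/-!
Substituting `X` for `z` and `f` for `Y` turns `P(z, f(z)) = 0` on `B(0,ρ)` into the identity
`P(X, f) = 0` in `ℂ_p⟦X⟧`: over an ultrametric field Cauchy products of convergent series
converge, and a power series vanishing on a disc is zero. For polynomials supported on the
monomials of `P`, the identity `Q(X, f) = 0` is a linear system in the coefficients of `Q` whose
equations (the coefficients of the series `X^i f^j`) lie in `𝕂`. Since it has the nonzero solution
`P` over `ℂ_p`, it has a nonzero solution `P̄` over `𝕂`; then `deg P̄ ≤ deg P = n`, and equality
holds by minimality of `n`.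
-/

theorem Subfield.exists_ne_zero_forall_dotProduct_eq_zero {L : Type*} [Field L] (K : Subfield L)
    {ι κ : Type*} [Fintype ι] (A : κ → ι → L) (hA : ∀ m i, A m i ∈ K) {x : ι → L} (hx : x ≠ 0)
    (hAx : ∀ m, A m ⬝ᵥ x = 0) :
    ∃ y : ι → L, y ≠ 0 ∧ (∀ i, y i ∈ K) ∧ ∀ m, A m ⬝ᵥ y = 0 := by
  classical
  by_contra! hK
  -- Otherwise the rows span the `K`-dual of `ι → K`. Extending scalars, `φ ↦ ∑ φ(eᵢ) xᵢ` kills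
  -- the rows, hence every coordinate functional, so `x = 0`.
  let row (m : κ) : Module.Dual K (ι → K) := ∑ i, (⟨A m i, hA m i⟩ : K) • LinearMap.proj i
  have hspan : Submodule.span K (Set.range row) = ⊤ := by
    refine Submodule.span_eq_top_of_ne_zero fun c hc => ?_
    obtain ⟨m, hm⟩ := hK (fun i => c i) (fun h => hc (funext fun i => by simpa using congrFun h i))
      fun i => (c i).2
    refine ⟨row m, ⟨m, rfl⟩, fun h => hm ?_⟩
    simpa [row, dotProduct, mul_comm] using congrArg ((↑) : K → L) h
  have hext : ∀ φ ∈ Submodule.span K (Set.range row), ∑ i, (φ (Pi.single i 1) : L) * x i = 0 := by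
    intro φ hφ
    induction hφ using Submodule.span_induction with
    | mem _ h =>
      obtain ⟨m, rfl⟩ := h
      simpa [row, Pi.single_apply, dotProduct] using hAx m
    | zero => simp
    | add φ ψ _ _ hφ hψ => simp [add_mul, Finset.sum_add_distrib, hφ, hψ]
    | smul c φ _ hφ => simp [mul_assoc, ← Finset.mul_sum, hφ]
  refine hx (funext fun i => ?_)
  simpa [Pi.single_apply, apply_ite] using hext (LinearMap.proj i) (hspan ▸ Submodule.mem_top)

theorem MvPolynomial.coeff_aeval_monomial_one_mem {L σ : Type*} [Field L] (K : Subfield L)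
    {g : σ → L⟦X⟧} (hg : ∀ i m, PowerSeries.coeff m (g i) ∈ K) (d : σ →₀ ℕ) (m : ℕ) :
    PowerSeries.coeff m (aeval g (monomial d (1 : L))) ∈ K := by
  have hg' : ∀ i, g i ∈ (PowerSeries.map K.subtype).range := fun i =>
    ⟨mk fun m => ⟨PowerSeries.coeff m (g i), hg i m⟩, by ext; simp⟩
  rw [aeval_monomial, map_one, one_mul]
  obtain ⟨h, hh⟩ : (d.prod fun i k => g i ^ k) ∈ (PowerSeries.map K.subtype).range :=
    prod_mem fun i _ => pow_mem (hg' i) (d i)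
  rw [← hh, PowerSeries.coeff_map]
  exact (PowerSeries.coeff m h).2

theorem MvPolynomial.coeff_aeval_sum_monomial {R σ : Type*} [CommSemiring R]
    {S : Finset (σ →₀ ℕ)} (g : σ → R⟦X⟧) (y : S → R) (m : ℕ) :
    PowerSeries.coeff m (aeval g (∑ d : S, monomial (d : σ →₀ ℕ) (y d))) =
      (fun d : S => PowerSeries.coeff m (aeval g (monomial (d : σ →₀ ℕ) (1 : R)))) ⬝ᵥ y := by
  rw [map_sum, map_sum, dotProduct]
  refine Finset.sum_congr rfl fun d _ => ?_
  rw [show monomial (d : σ →₀ ℕ) (y d) = y d • monomial (d : σ →₀ ℕ) 1 by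
      rw [smul_monomial, smul_eq_mul, mul_one],
    map_smul, PowerSeries.coeff_smul, smul_eq_mul, mul_comm]

theorem MvPolynomial.coeff_sum_monomial_coe {R σ : Type*} [CommSemiring R]
    {S : Finset (σ →₀ ℕ)} (y : S → R) (d : S) :
    coeff (d : σ →₀ ℕ) (∑ d : S, monomial (d : σ →₀ ℕ) (y d)) = y d := by
  classical
  simp [coeff_sum, coeff_monomial]

theorem MvPolynomial.exists_coeff_mem_subfield_aeval_eq_zero {L σ : Type*} [Field L]
    (K : Subfield L) {g : σ → L⟦X⟧} (hg : ∀ i m, PowerSeries.coeff m (g i) ∈ K)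
    {P : MvPolynomial σ L} (hP0 : P ≠ 0) (hP : aeval g P = 0) :
    ∃ Q : MvPolynomial σ L, Q ≠ 0 ∧ Q.totalDegree ≤ P.totalDegree ∧ (∀ d, Q.coeff d ∈ K) ∧
      aeval g Q = 0 := by
  classical
  have hPsum : P = ∑ d : P.support, monomial (d : σ →₀ ℕ) (P.coeff d) :=
    P.as_sum.trans (Finset.sum_coe_sort _ _).symm
  have hx : (fun d : P.support => P.coeff d) ≠ 0 := by
    obtain ⟨d, hd⟩ := ne_zero_iff.mp hP0
    exact fun h => hd (congrFun h ⟨d, mem_support_iff.mpr hd⟩)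
  obtain ⟨y, hy0, hyK, hy⟩ := K.exists_ne_zero_forall_dotProduct_eq_zero
    (fun m (d : P.support) => PowerSeries.coeff m (aeval g (monomial (d : σ →₀ ℕ) (1 : L))))
    (fun m d => coeff_aeval_monomial_one_mem K hg d m) hx
    fun m => by rw [← coeff_aeval_sum_monomial, ← hPsum, hP, map_zero]
  refine ⟨∑ d : P.support, monomial (d : σ →₀ ℕ) (y d), fun h => hy0 ?_, ?_, fun d => ?_, ?_⟩
  · ext d
    rw [Pi.zero_apply, ← coeff_sum_monomial_coe y d, h, coeff_zero]
  · refine (totalDegree_finsetSum _ _).trans (Finset.sup_le fun d _ => ?_)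
    exact (totalDegree_monomial_le _ _).trans (le_totalDegree d.2)
  · rw [coeff_sum]
    refine sum_mem fun d _ => ?_
    rw [coeff_monomial]
    split_ifs
    exacts [hyK d, zero_mem K]
  · ext m
    rw [coeff_aeval_sum_monomial, hy m, map_zero]

instance IsUltrametricDist.nonarchimedeanRing (R : Type*) [NormedRing R] [IsUltrametricDist R] :
    NonarchimedeanRing R :=
  ⟨NonarchimedeanAddGroup.is_nonarchimedean⟩

theorem HasSum.coeff_mul_mul_pow {R : Type*} [NormedCommRing R] [IsUltrametricDist R]
    {φ ψ : R⟦X⟧} {z a b : R} (hφ : HasSum (fun m => coeff m φ * z ^ m) a)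
    (hψ : HasSum (fun m => coeff m ψ * z ^ m) b) :
    HasSum (fun m => coeff m (φ * ψ) * z ^ m) (a * b) := by
  have hprod := (Finset.HasAntidiagonal.sigmaAntidiagonalEquivProd.hasSum_iff).mpr
    (hφ.mul_of_nonarchimedean hψ)
  refine hprod.sigma fun m => ?_
  have hcoeff : coeff m (φ * ψ) * z ^ m = ∑ kl ∈ Finset.HasAntidiagonal.antidiagonal m,
      coeff kl.1 φ * z ^ kl.1 * (coeff kl.2 ψ * z ^ kl.2) := by
    rw [coeff_mul, Finset.sum_mul]
    refine Finset.sum_congr rfl fun kl hkl => ?_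
    rw [← Finset.HasAntidiagonal.mem_antidiagonal.mp hkl, pow_add]
    ring
  rw [hcoeff, ← Finset.sum_coe_sort]
  exact hasSum_fintype _

theorem eq_zero_of_forall_hasSum_mul_pow_eq_zero {𝕜 : Type*} [NontriviallyNormedField 𝕜]
    {ρ : ℝ≥0∞} (hρ : 0 < ρ) {b : ℕ → 𝕜}
    (hb : ∀ z : 𝕜, (‖z‖₊ : ℝ≥0∞) < ρ → HasSum (fun m => b m * z ^ m) 0) : b = 0 := by
  obtain ⟨r, hr0, hrρ⟩ := ENNReal.lt_iff_exists_nnreal_btwn.mp hρ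
  obtain ⟨z₀, hz₀0, hz₀r⟩ := NormedField.exists_norm_lt 𝕜 (by exact_mod_cast hr0)
  have hz₀ρ : (‖z₀‖₊ : ℝ≥0∞) < ρ := lt_trans (by exact_mod_cast hz₀r) hrρ
  let p := FormalMultilinearSeries.ofScalars 𝕜 b
  have hradius : (‖z₀‖₊ : ℝ≥0∞) ≤ p.radius := by
    refine p.le_radius_of_tendsto (l := 0) ?_
    simpa [p, FormalMultilinearSeries.ofScalars_norm, norm_mul, norm_pow] using
      (hb z₀ hz₀ρ).summable.tendsto_atTop_zero.norm
  have hseries : HasFPowerSeriesOnBall (fun _ => (0 : 𝕜)) p 0 ‖z₀‖₊ :=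
    { r_le := hradius
      r_pos := by simpa using hz₀0
      hasSum := fun {y} hy => by
        simpa [p, FormalMultilinearSeries.ofScalars_apply_eq, mul_comm] using
          hb y (lt_trans (by simpa [← NNReal.coe_lt_coe] using hy) hz₀ρ) }
  funext m
  simpa [p] using congrArg (· m) hseries.hasFPowerSeriesAt.eq_zero

theorem PowerSeries.hasSum_coeff_X_mul_pow {R : Type*} [NormedRing R] (z : R) :
    HasSum (fun m => coeff m (X : R⟦X⟧) * z ^ m) z := by
  simpa using hasSum_single (f := fun m => coeff m (X : R⟦X⟧) * z ^ m) 1 fun m hm => by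
    simp [coeff_X, hm]

theorem MvPolynomial.hasSum_coeff_aeval_mul_pow {σ R : Type*} [NormedCommRing R]
    [IsUltrametricDist R] {g : σ → R⟦X⟧} {z : R} {w : σ → R}
    (hg : ∀ i, HasSum (fun m => PowerSeries.coeff m (g i) * z ^ m) (w i)) (Q : MvPolynomial σ R) :
    HasSum (fun m => PowerSeries.coeff m (aeval g Q) * z ^ m) (eval w Q) := by
  induction Q using MvPolynomial.induction_on with
  | C c =>
    simpa using hasSum_single (f := fun m => PowerSeries.coeff m (aeval g (C c)) * z ^ m) 0
      fun m hm => by simp [PowerSeries.coeff_C, hm]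
  | add Q₁ Q₂ h₁ h₂ => simpa only [map_add, add_mul] using h₁.add h₂
  | mul_X Q i h => simpa only [map_mul, aeval_X, eval_X] using h.coeff_mul_mul_pow (hg i)

theorem MvPolynomial.aeval_X_mk_eq_zero_iff {𝕜 : Type*} [NontriviallyNormedField 𝕜]
    [IsUltrametricDist 𝕜] {ρ : ℝ≥0∞} (hρ : 0 < ρ) {a : ℕ → 𝕜} {F : 𝕜 → 𝕜}
    (hF : ∀ z : 𝕜, (‖z‖₊ : ℝ≥0∞) < ρ → HasSum (fun n => a n * z ^ n) (F z))
    (Q : MvPolynomial (Fin 2) 𝕜) :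
    aeval ![PowerSeries.X, mk a] Q = 0 ↔ ∀ z : 𝕜, (‖z‖₊ : ℝ≥0∞) < ρ → eval ![z, F z] Q = 0 := by
  have hQ (z : 𝕜) (hz : (‖z‖₊ : ℝ≥0∞) < ρ) :
      HasSum (fun m => PowerSeries.coeff m (aeval ![PowerSeries.X, mk a] Q) * z ^ m)
        (eval ![z, F z] Q) := by
    refine hasSum_coeff_aeval_mul_pow (fun i => ?_) Q
    fin_cases i
    · exact hasSum_coeff_X_mul_pow z
    · simpa using hF z hz
  refine ⟨fun h z hz => ?_, fun h => ?_⟩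
  · have hsum := hQ z hz
    simp only [h, map_zero, zero_mul] at hsum
    exact hsum.unique hasSum_zero
  · ext m
    exact congrFun (eq_zero_of_forall_hasSum_mul_pow_eq_zero hρ fun z hz => h z hz ▸ hQ z hz) m

theorem algebraic_over_subfield_general
    (Cp : Type) [NontriviallyNormedField Cp] [IsUltrametricDist Cp]
    (K : Subfield Cp) (ρ : ℝ≥0∞) (hρ : 0 < ρ)
    (a : ℕ → Cp) (ha : ∀ n, a n ∈ K)
    (hconv : ∀ z : Cp, (‖z‖₊ : ℝ≥0∞) < ρ → Summable fun n => a n * z ^ n)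
    (F : Cp → Cp) (hF : ∀ z : Cp, F z = ∑' n, a n * z ^ n)
    (n : ℕ) (P : MvPolynomial (Fin 2) Cp) (hP0 : P ≠ 0) (hPdeg : P.totalDegree = n)
    (hPvan : ∀ z : Cp, (‖z‖₊ : ℝ≥0∞) < ρ → MvPolynomial.eval ![z, F z] P = 0)
    (hmin : ∀ Q : MvPolynomial (Fin 2) Cp, Q ≠ 0 →
      (∀ z : Cp, (‖z‖₊ : ℝ≥0∞) < ρ → MvPolynomial.eval ![z, F z] Q = 0) →
      n ≤ Q.totalDegree) :
    ∃ Q : MvPolynomial (Fin 2) Cp, Q ≠ 0 ∧ Q.totalDegree = n ∧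
      (∀ m, Q.coeff m ∈ K) ∧
      ∀ z : Cp, (‖z‖₊ : ℝ≥0∞) < ρ → MvPolynomial.eval ![z, F z] Q = 0 := by
  have hvan := MvPolynomial.aeval_X_mk_eq_zero_iff hρ fun z hz => hF z ▸ (hconv z hz).hasSum
  have hcoeff : ∀ i m, coeff m (![X, mk a] i) ∈ K := by
    intro i m
    fin_cases i
    · simp [coeff_X, apply_ite (· ∈ K)]
    · simpa using ha m
  obtain ⟨Q, hQ0, hQdeg, hQK, hQ⟩ :=
    MvPolynomial.exists_coeff_mem_subfield_aeval_eq_zero K hcoeff hP0 ((hvan P).2 hPvan)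
  have hQvan := (hvan Q).1 hQ
  exact ⟨Q, hQ0, le_antisymm (hPdeg ▸ hQdeg) (hmin Q hQ0 hQvan), hQK, hQvan⟩

/-- If `𝕂` is a subfield of `ℂ_p` and `f ∈ 𝕂[[z]]` has radius of convergence `ρ` and is
algebraic of (minimal) total degree `n` over `ℂ_p[z]`, then `f` is algebraic of degree `n`
over `𝕂[z]`: some nonzero polynomial `P̄(X,Y)` of total degree `n` with coefficients in `𝕂`
vanishes identically on the graph of `f` over `B(0,ρ)`. -/
theorem algebraic_over_subfield {p : ℕ} [Fact p.Prime]
    (Cp : Type) [NontriviallyNormedField Cp] [IsUltrametricDist Cp] [CompleteSpace Cp]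
    [IsAlgClosed Cp] [Algebra ℚ_[p] Cp]
    (hisom : ∀ x : ℚ_[p], ‖algebraMap ℚ_[p] Cp x‖ = ‖x‖)
    (K : Subfield Cp) (ρ : ℝ≥0∞) (hρ : 0 < ρ)
    (a : ℕ → Cp) (ha : ∀ n, a n ∈ K)
    (hconv : ∀ z : Cp, (‖z‖₊ : ℝ≥0∞) < ρ → Summable fun n => a n * z ^ n)
    (F : Cp → Cp) (hF : ∀ z : Cp, F z = ∑' n, a n * z ^ n)
    (n : ℕ) (P : MvPolynomial (Fin 2) Cp) (hP0 : P ≠ 0) (hPdeg : P.totalDegree = n)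
    (hPvan : ∀ z : Cp, (‖z‖₊ : ℝ≥0∞) < ρ → MvPolynomial.eval ![z, F z] P = 0)
    (hmin : ∀ Q : MvPolynomial (Fin 2) Cp, Q ≠ 0 →
      (∀ z : Cp, (‖z‖₊ : ℝ≥0∞) < ρ → MvPolynomial.eval ![z, F z] Q = 0) →
      n ≤ Q.totalDegree) :
    ∃ Q : MvPolynomial (Fin 2) Cp, Q ≠ 0 ∧ Q.totalDegree = n ∧
      (∀ m, Q.coeff m ∈ K) ∧
      ∀ z : Cp, (‖z‖₊ : ℝ≥0∞) < ρ → MvPolynomial.eval ![z, F z] Q = 0 :=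
  algebraic_over_subfield_general Cp K ρ hρ a ha hconv F hF n P hP0 hPdeg hPvan hmin
end

section
/- Let 𝕂 be a countable subfield of ℂ_p and ρ ∈ (0,∞]. The set of power series with coefficients in 𝕂, radius of convergence ρ, that are algebraic over ℂ_p[z] (i.e., satisfy a nontrivial polynomial identity P(z, f(z)) = 0 on B(0,ρ) for some nonzero P ∈ ℂ_p[X,Y]) is countable. -/
/-!
Write `f = ∑ aₙ zⁿ` and `F = ∑ aₙ Xⁿ ∈ 𝕂⟦X⟧`. Power series converging absolutely on a closed
ball of positive radius form an algebra on which evaluation is a ring homomorphism, so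
`P(X, F)` converges near `0` to `P(z, f(z)) = 0`, and the identity theorem gives `P(X, F) = 0`
in `ℂ_p⟦X⟧`. Applying to the coefficients of `P` a `𝕂`-linear functional `ℂ_p → 𝕂` that does
not vanish on one of them produces a nonzero `Q ∈ 𝕂[X, Y]` with `Q(X, F) = 0`, because `X` and
`F` have coefficients in `𝕂`. Hence `F` is algebraic over the countable domain `𝕂[X]`, and
only countably many elements of the domain `𝕂⟦X⟧` are.
-/

open scoped ENNReal NNReal Topology

open PowerSeries Finset.HasAntidiagonal

instance {R : Type*} [Semiring R] [Countable R] : Countable (Polynomial R) :=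
  have : Countable (AddMonoidAlgebra R ℕ) := AddMonoidAlgebra.coeffEquiv.injective.countable
  Polynomial.toFinsupp_injective.countable

namespace PowerSeries

section Convergent

variable (R : Type*) [NormedCommRing R]

def convergentSubalgebra (r : ℝ≥0) : Subalgebra R R⟦X⟧ where
  carrier := {f | Summable fun n => ‖coeff n f‖ * r ^ n}
  add_mem' {f g} hf hg := by
    refine (hf.add hg).of_nonneg_of_le (fun n => by positivity) fun n => ?_
    rw [map_add, ← add_mul]
    exact mul_le_mul_of_nonneg_right (norm_add_le _ _) (by positivity)
  mul_mem' {f g} hf hg := by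
    have key := summable_norm_sum_mul_antidiagonal_of_summable_norm
      (f := fun n => ‖coeff n f‖ * (r : ℝ) ^ n) (g := fun n => ‖coeff n g‖ * (r : ℝ) ^ n)
      (by simpa only [Real.norm_eq_abs] using hf.abs)
      (by simpa only [Real.norm_eq_abs] using hg.abs)
    refine key.of_nonneg_of_le (fun n => by positivity) fun n => ?_
    calc ‖coeff n (f * g)‖ * r ^ n
        ≤ (∑ kl ∈ antidiagonal n, ‖coeff kl.1 f‖ * ‖coeff kl.2 g‖) * r ^ n := by
          rw [coeff_mul]
          gcongr
          exact (norm_sum_le _ _).trans (Finset.sum_le_sum fun kl _ => norm_mul_le _ _)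
      _ = ∑ kl ∈ antidiagonal n, ‖coeff kl.1 f‖ * r ^ kl.1 * (‖coeff kl.2 g‖ * r ^ kl.2) := by
          rw [Finset.sum_mul]
          refine Finset.sum_congr rfl fun kl hkl => ?_
          rw [← mem_antidiagonal.mp hkl, pow_add]
          ring
      _ ≤ _ := Real.le_norm_self _
  algebraMap_mem' c := by
    refine summable_of_ne_finset_zero (s := {0}) fun n hn => ?_
    rw [Algebra.algebraMap_eq_smul_one, smul_eq_C_mul, mul_one, coeff_C,
      if_neg (by simpa using hn), norm_zero, zero_mul]

variable {R}

theorem mem_convergentSubalgebra {r : ℝ≥0} {f : R⟦X⟧} :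
    f ∈ convergentSubalgebra R r ↔ Summable fun n => ‖coeff n f‖ * r ^ n :=
  Iff.rfl

theorem X_mem_convergentSubalgebra (r : ℝ≥0) : X ∈ convergentSubalgebra R r :=
  summable_of_ne_finset_zero (s := {1}) fun n hn => by
    rw [coeff_X, if_neg (by simpa using hn), norm_zero, zero_mul]

variable [NormOneClass R]

theorem summable_norm_coeff_mul_pow {r : ℝ≥0} {f : R⟦X⟧} (hf : f ∈ convergentSubalgebra R r)
    {z : R} (hz : ‖z‖ ≤ r) : Summable fun n => ‖coeff n f * z ^ n‖ :=
  hf.of_nonneg_of_le (fun n => norm_nonneg _) fun n =>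
    (norm_mul_le _ _).trans <| by gcongr; exact (norm_pow_le _ n).trans (by gcongr)

variable [CompleteSpace R]

noncomputable def convergentSubalgebra.eval {r : ℝ≥0} (z : R) (hz : ‖z‖ ≤ r) :
    convergentSubalgebra R r →ₐ[R] R where
  toFun f := ∑' n, coeff n (f : R⟦X⟧) * z ^ n
  map_one' := by
    rw [tsum_eq_single 0 fun n hn => by simp [coeff_one, hn]]
    simp
  map_mul' f g := by
    rw [tsum_mul_tsum_eq_tsum_sum_antidiagonal_of_summable_norm
      (summable_norm_coeff_mul_pow f.2 hz) (summable_norm_coeff_mul_pow g.2 hz)]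
    refine tsum_congr fun n => ?_
    rw [Subalgebra.coe_mul, coeff_mul, Finset.sum_mul]
    refine Finset.sum_congr rfl fun kl hkl => ?_
    rw [← mem_antidiagonal.mp hkl, pow_add]
    ring
  map_zero' := by simp
  map_add' f g := by
    simp only [Subalgebra.coe_add, map_add, add_mul]
    exact (summable_norm_coeff_mul_pow f.2 hz).of_norm.tsum_add
      (summable_norm_coeff_mul_pow g.2 hz).of_norm
  commutes' c := by
    simp only [Algebra.algebraMap_eq_smul_one]
    rw [tsum_eq_single 0 fun n hn => by simp [hn]]
    simp

theorem convergentSubalgebra.eval_apply {r : ℝ≥0} (z : R) (hz : ‖z‖ ≤ r)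
    (f : convergentSubalgebra R r) : eval z hz f = ∑' n, coeff n (f : R⟦X⟧) * z ^ n :=
  rfl

end Convergent

section Analytic

variable {𝕜 : Type*} [NontriviallyNormedField 𝕜]

open FormalMultilinearSeries in
theorem mk_mem_convergentSubalgebra {a : ℕ → 𝕜} {z : 𝕜} (h : Summable fun n => a n * z ^ n)
    {r : ℝ≥0} (hr : r < ‖z‖₊) : mk a ∈ convergentSubalgebra 𝕜 r := by
  have hz : (‖z‖₊ : ℝ≥0∞) ≤ (ofScalars 𝕜 a).radius := by
    refine (ofScalars 𝕜 a).le_radius_of_tendsto (l := 0) ?_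
    simpa [ofScalars_norm, norm_mul, norm_pow] using h.tendsto_atTop_zero.norm
  simpa [mem_convergentSubalgebra, ofScalars_norm] using
    (ofScalars 𝕜 a).summable_norm_mul_pow ((ENNReal.coe_lt_coe.mpr hr).trans_le hz)

theorem exists_pos_mk_mem_convergentSubalgebra {a : ℕ → 𝕜} {ρ : ℝ≥0∞} (hρ : 0 < ρ)
    (h : ∀ z : 𝕜, (‖z‖₊ : ℝ≥0∞) < ρ → Summable fun n => a n * z ^ n) :
    ∃ r > 0, mk a ∈ convergentSubalgebra 𝕜 r := by
  obtain ⟨δ, hδ, hδρ⟩ := ENNReal.lt_iff_exists_nnreal_btwn.mp hρ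
  obtain ⟨z, hz, hzδ⟩ := NormedField.exists_nnnorm_lt 𝕜 (ENNReal.coe_pos.mp hδ)
  exact ⟨‖z‖₊ / 2, half_pos hz, mk_mem_convergentSubalgebra
    (h z ((ENNReal.coe_lt_coe.mpr hzδ).trans hδρ)) (NNReal.half_lt_self hz.ne')⟩

variable [CompleteSpace 𝕜]

open FormalMultilinearSeries in
theorem eq_zero_of_eventually_tsum_eq_zero {r : ℝ≥0} (hr : 0 < r) {f : 𝕜⟦X⟧}
    (hf : f ∈ convergentSubalgebra 𝕜 r) (h : ∀ᶠ z in 𝓝 0, ∑' n, coeff n f * z ^ n = 0) :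
    f = 0 := by
  set p := ofScalars 𝕜 fun n => coeff n f
  have hp : (r : ℝ≥0∞) ≤ p.radius :=
    p.le_radius_of_summable (by simpa [p, ofScalars_norm] using mem_convergentSubalgebra.mp hf)
  have hsum : p.sum = fun z => ∑' n, coeff n f * z ^ n := by
    simpa [p, ofScalarsSum] using ofScalarsSum_eq_tsum (E := 𝕜) fun n => coeff n f
  have hp0 : p = 0 :=
    ((p.hasFPowerSeriesOnBall ((ENNReal.coe_pos.mpr hr).trans_le hp)).hasFPowerSeriesAt
      ).eq_zero_of_eventually (by rw [hsum]; exact h)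
  ext n
  simpa [p] using congrFun ((ofScalars_series_eq_zero 𝕜).mp hp0) n

theorem aeval_eq_zero_of_eventually_eval_eq_zero {σ : Type*} {r : ℝ≥0} (hr : 0 < r)
    {v : σ → 𝕜⟦X⟧} (hv : ∀ i, v i ∈ convergentSubalgebra 𝕜 r) (P : MvPolynomial σ 𝕜)
    (h : ∀ᶠ z in 𝓝 0, MvPolynomial.eval (fun i => ∑' n, coeff n (v i) * z ^ n) P = 0) :
    MvPolynomial.aeval v P = 0 := by
  let w : σ → convergentSubalgebra 𝕜 r := fun i => ⟨v i, hv i⟩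
  have hw : MvPolynomial.aeval v P = (MvPolynomial.aeval w P : 𝕜⟦X⟧) :=
    (MvPolynomial.comp_aeval_apply (f := w) (convergentSubalgebra 𝕜 r).val P).symm
  rw [hw]
  refine eq_zero_of_eventually_tsum_eq_zero hr (MvPolynomial.aeval w P).2 ?_
  filter_upwards [h, Metric.closedBall_mem_nhds (0 : 𝕜) hr] with z hz hzr
  rw [← convergentSubalgebra.eval_apply z (by simpa using hzr), MvPolynomial.comp_aeval_apply]
  exact hz

end Analytic

theorem exists_aeval_eq_zero_of_aeval_map_eq_zero {K L σ : Type*} [Field K] [CommRing L]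
    [Algebra K L] {v : σ → K⟦X⟧} {P : MvPolynomial σ L} (hP : P ≠ 0)
    (h : MvPolynomial.aeval (fun i => map (algebraMap K L) (v i)) P = 0) :
    ∃ Q : MvPolynomial σ K, Q ≠ 0 ∧ MvPolynomial.aeval v Q = 0 := by
  classical
  obtain ⟨m, hm⟩ := MvPolynomial.ne_zero_iff.mp hP
  obtain ⟨g, hg⟩ := Module.Projective.exists_dual_eq_one K hm
  refine ⟨∑ d ∈ P.support, MvPolynomial.monomial d (g (P.coeff d)), fun hQ => ?_, ?_⟩
  · have := congrArg (MvPolynomial.coeff m) hQ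
    simp only [MvPolynomial.coeff_sum, MvPolynomial.coeff_monomial, Finset.sum_ite_eq',
      MvPolynomial.mem_support_iff, ne_eq, hm, not_false_eq_true, if_true, hg] at this
    exact one_ne_zero this
  · ext n
    have := congrArg (fun f => g (coeff n f)) h
    conv_lhs at this => rw [MvPolynomial.as_sum P]
    simp only [map_sum, MvPolynomial.aeval_monomial, ← map_pow, ← map_finsuppProd,
      ← Algebra.smul_def, coeff_map, smul_eq_mul, ← Algebra.commutes, map_smul,
      map_zero] at this
    simpa [MvPolynomial.aeval_monomial, mul_comm] using this

theorem isAlgebraic_of_aeval_eq_zero {R : Type*} [CommRing R] {F : R⟦X⟧}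
    {Q : MvPolynomial (Fin 2) R} (hQ : Q ≠ 0) (h : MvPolynomial.aeval ![X, F] Q = 0) :
    IsAlgebraic (Polynomial R) F := by
  refine ⟨(Polynomial.Bivariate.equivMvPolynomial R).symm Q, by simpa using hQ, ?_⟩
  have : (Polynomial.aeval F).restrictScalars R =
      (MvPolynomial.aeval ![X, F]).comp (Polynomial.Bivariate.equivMvPolynomial R).toAlgHom := by
    ext <;> simp [algebraMap_apply']
  change (Polynomial.aeval F).restrictScalars R _ = 0
  rw [this]
  simpa using h

end PowerSeries

theorem countable_algebraic_power_series_general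
    (Cp : Type) [NontriviallyNormedField Cp] [CompleteSpace Cp]
    (K : Subfield Cp) (hK : (K : Set Cp).Countable)
    (ρ : ℝ≥0∞) (hρ : 0 < ρ) :
    Set.Countable {a : ℕ → Cp |
      (∀ n, a n ∈ K) ∧
      (∀ z : Cp, (‖z‖₊ : ℝ≥0∞) < ρ → Summable fun n => a n * z ^ n) ∧
      (∀ z : Cp, ρ < (‖z‖₊ : ℝ≥0∞) → ¬ Summable fun n => a n * z ^ n) ∧
      ∃ P : MvPolynomial (Fin 2) Cp, P ≠ 0 ∧
        ∀ z : Cp, (‖z‖₊ : ℝ≥0∞) < ρ →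
          MvPolynomial.eval ![z, ∑' n, a n * z ^ n] P = 0} := by
  have : Countable K := hK.to_subtype
  have : FaithfulSMul (Polynomial K) K⟦X⟧ :=
    (faithfulSMul_iff_algebraMap_injective _ _).mpr (Polynomial.coe_injective K)
  refine Set.MapsTo.countable_of_injOn (f := mk)
    (t := map (algebraMap K Cp) '' {F | IsAlgebraic (Polynomial K) F}) ?_
    (fun a _ b _ hab => funext fun n => by simpa using congrArg (coeff n) hab)
    ((Algebraic.countable (Polynomial K) K⟦X⟧).image _)
  rintro a ⟨haK, hconv, -, P, hP, hPz⟩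
  set F : K⟦X⟧ := mk fun n => ⟨a n, haK n⟩
  have hF : map (algebraMap K Cp) F = mk a := by
    ext n; simp only [F, coeff_map, coeff_mk]; rfl
  obtain ⟨r, hr, haF⟩ := exists_pos_mk_mem_convergentSubalgebra hρ hconv
  have hv : ∀ i, ![X, mk a] i ∈ convergentSubalgebra Cp r :=
    Fin.forall_fin_two.mpr ⟨X_mem_convergentSubalgebra r, haF⟩
  have hball : ∀ᶠ z in 𝓝 (0 : Cp), (‖z‖₊ : ℝ≥0∞) < ρ :=
    ((ENNReal.continuous_coe.comp continuous_nnnorm).tendsto' 0 0 (by simp)).eventually_lt_const hρ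
  have hPF : MvPolynomial.aeval ![X, mk a] P = 0 := by
    refine aeval_eq_zero_of_eventually_eval_eq_zero hr hv P (hball.mono fun z hz => ?_)
    convert hPz z hz using 3
    funext i; fin_cases i <;> simp [coeff_X]
  have hXF : (fun i => map (algebraMap K Cp) (![X, F] i)) = ![X, mk a] := by
    funext i; fin_cases i <;> simp [hF]
  obtain ⟨Q, hQ, hQF⟩ := exists_aeval_eq_zero_of_aeval_map_eq_zero hP (hXF ▸ hPF)
  exact ⟨F, isAlgebraic_of_aeval_eq_zero hQ hQF, hF⟩

/-- For a countable subfield `𝕂 ⊆ ℂ_p`, the set of power series with coefficients in `𝕂`,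
radius of convergence `ρ`, that are algebraic over `ℂ_p[z]`, is countable. -/
theorem countable_algebraic_power_series {p : ℕ} [Fact p.Prime]
    (Cp : Type) [NontriviallyNormedField Cp] [IsUltrametricDist Cp] [CompleteSpace Cp]
    [IsAlgClosed Cp] [Algebra ℚ_[p] Cp]
    (hisom : ∀ x : ℚ_[p], ‖algebraMap ℚ_[p] Cp x‖ = ‖x‖)
    (K : Subfield Cp) (hK : (K : Set Cp).Countable)
    (ρ : ℝ≥0∞) (hρ : 0 < ρ) :
    Set.Countable {a : ℕ → Cp |
      (∀ n, a n ∈ K) ∧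
      (∀ z : Cp, (‖z‖₊ : ℝ≥0∞) < ρ → Summable fun n => a n * z ^ n) ∧
      (∀ z : Cp, ρ < (‖z‖₊ : ℝ≥0∞) → ¬ Summable fun n => a n * z ^ n) ∧
      ∃ P : MvPolynomial (Fin 2) Cp, P ≠ 0 ∧
        ∀ z : Cp, (‖z‖₊ : ℝ≥0∞) < ρ →
          MvPolynomial.eval ![z, ∑' n, a n * z ^ n] P = 0} :=
  countable_algebraic_power_series_general Cp K hK ρ hρ
end

section
/- A p-adic entire function f : ℂ_p → ℂ_p (given by an everywhere-convergent power series) is algebraic over ℂ_p[z] (i.e., satisfies P(z, f(z)) = 0 identically for some nonzero P ∈ ℂ_p[X,Y]) if and only if f is a polynomial function. -/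
/-!
If `P(z, F z) = 0` with `P ≠ 0`, Cauchy's bound on the roots of `P(z, ·)` shows that `F` grows
at most polynomially. A p-adic Liouville theorem then forces `F` to be a polynomial: averaging a
partial sum of the series over the `ℓ`-th roots of unity isolates a single coefficient, and since
`‖ℓ‖ = 1` (true for one of any two consecutive integers) the ultrametric inequality yields the
Cauchy estimate `‖aₙ‖ rⁿ ≤ sup_{‖z‖ = r} ‖F z‖`. Conversely, a polynomial `Q` satisfies
`Y - Q(X) = 0`.
-/

open Polynomial Finset Filter
open scoped Polynomial.Bivariate

theorem IsUltrametricDist.exists_lt_and_norm_natCast_eq_one {K : Type*} [NormedRing K]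
    [NormOneClass K] [IsUltrametricDist K] (m : ℕ) : ∃ ℓ : ℕ, m < ℓ ∧ ‖(ℓ : K)‖ = 1 := by
  have h := norm_add_le_max ((m + 2 : ℕ) : K) (-((m + 1 : ℕ) : K))
  have h1 : ((m + 2 : ℕ) : K) + -((m + 1 : ℕ) : K) = 1 := by rw [Nat.cast_succ (m + 1)]; abel
  rw [norm_neg, h1, norm_one] at h
  rcases le_max_iff.mp h with h | h
  · exact ⟨m + 2, by omega, le_antisymm (norm_natCast_le_one K _) h⟩
  · exact ⟨m + 1, by omega, le_antisymm (norm_natCast_le_one K _) h⟩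

theorem IsPrimitiveRoot.geom_sum_pow_eq_ite {R : Type*} [CommRing R] [IsDomain R] {ζ : R}
    {ℓ : ℕ} (hζ : IsPrimitiveRoot ζ ℓ) (e : ℕ) :
    ∑ j ∈ range ℓ, (ζ ^ e) ^ j = if ℓ ∣ e then (ℓ : R) else 0 := by
  split_ifs with he
  · simp [(hζ.pow_eq_one_iff_dvd e).mpr he]
  · have hne : ζ ^ e - 1 ≠ 0 := sub_ne_zero.mpr fun h => he ((hζ.pow_eq_one_iff_dvd e).mp h)
    refine (mul_eq_zero.mp ?_).resolve_right hne
    rw [geom_sum_mul, ← pow_mul, mul_comm, pow_mul, hζ.pow_eq_one, one_pow, sub_self]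

-- Discrete Fourier inversion, with `(ζ ^ j) ^ (ℓ - n)` standing for `ζ ^ (-j * n)`.
theorem IsPrimitiveRoot.sum_pow_mul_sum_range_eq {R : Type*} [CommRing R] [IsDomain R] {ζ : R}
    {ℓ n : ℕ} (hζ : IsPrimitiveRoot ζ ℓ) (hn : n < ℓ) (b : ℕ → R) (c : R) :
    ∑ j ∈ range ℓ, (ζ ^ j) ^ (ℓ - n) * ∑ k ∈ range ℓ, b k * (c * ζ ^ j) ^ k =
      ℓ * (b n * c ^ n) := by
  have hdvd : ∀ k < ℓ, ℓ ∣ k + (ℓ - n) ↔ k = n := by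
    intro k hk
    constructor
    · rintro ⟨d, hd⟩
      have : d < 2 := by
        have : ℓ * d < ℓ * 2 := by omega
        exact Nat.lt_of_mul_lt_mul_left this
      interval_cases d <;> omega
    · rintro rfl
      exact ⟨1, by omega⟩
  calc ∑ j ∈ range ℓ, (ζ ^ j) ^ (ℓ - n) * ∑ k ∈ range ℓ, b k * (c * ζ ^ j) ^ k
      = ∑ k ∈ range ℓ, b k * c ^ k * ∑ j ∈ range ℓ, (ζ ^ (k + (ℓ - n))) ^ j := by
        simp_rw [mul_sum]
        rw [sum_comm]
        refine sum_congr rfl fun k _ => sum_congr rfl fun j _ => ?_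
        ring
    _ = ℓ * (b n * c ^ n) := by
        rw [sum_eq_single_of_mem n (mem_range.mpr hn) fun k hk hkn => ?_]
        · simp [hζ.geom_sum_pow_eq_ite, Nat.add_sub_cancel' hn.le, mul_comm]
        · simp [hζ.geom_sum_pow_eq_ite, (hdvd k (mem_range.mp hk)).not.mpr hkn]

theorem norm_eq_one_of_pow_eq_one {K : Type*} [NormedDivisionRing K] {x : K} {n : ℕ}
    (h : x ^ n = 1) (hn : n ≠ 0) : ‖x‖ = 1 :=
  (pow_eq_one_iff_of_nonneg (norm_nonneg x) hn).mp (by rw [← norm_pow, h, norm_one])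

section Ultrametric

variable {K : Type*} [NormedField K] [IsUltrametricDist K]

theorem IsPrimitiveRoot.norm_mul_pow_le_of_norm_sum_range_le {ζ : K} {ℓ n : ℕ}
    (hζ : IsPrimitiveRoot ζ ℓ) (hℓ : ‖(ℓ : K)‖ = 1) (hn : n < ℓ) (b : ℕ → K) (c : K) {M : ℝ}
    (hM : ∀ j < ℓ, ‖∑ k ∈ range ℓ, b k * (c * ζ ^ j) ^ k‖ ≤ M) : ‖b n‖ * ‖c‖ ^ n ≤ M := by
  have hζ1 : ‖ζ‖ = 1 := norm_eq_one_of_pow_eq_one hζ.pow_eq_one (by omega)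
  calc ‖b n‖ * ‖c‖ ^ n = ‖(ℓ : K) * (b n * c ^ n)‖ := by simp [hℓ]
    _ = ‖∑ j ∈ range ℓ, (ζ ^ j) ^ (ℓ - n) * ∑ k ∈ range ℓ, b k * (c * ζ ^ j) ^ k‖ := by
      rw [hζ.sum_pow_mul_sum_range_eq hn]
    _ ≤ M := by
      refine IsUltrametricDist.norm_sum_le_of_forall_le_of_nonempty
        (nonempty_range_iff.mpr (by omega)) fun j hj => ?_
      rw [norm_mul, norm_pow, norm_pow, hζ1, one_pow, one_pow, one_mul]
      exact hM j (mem_range.mp hj)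

theorem norm_mul_pow_le_of_norm_tsum_le [IsAlgClosed K] {a : ℕ → K} {c : K} {M : ℝ}
    (hconv : ∀ z, ‖z‖ = ‖c‖ → Summable fun k => a k * z ^ k)
    (hM : ∀ z, ‖z‖ = ‖c‖ → ‖∑' k, a k * z ^ k‖ ≤ M) (n : ℕ) : ‖a n‖ * ‖c‖ ^ n ≤ M := by
  refine le_of_forall_pos_le_add fun ε hε => ?_
  have hterm : Tendsto (fun k => ‖a k * c ^ k‖) atTop (nhds 0) := by
    simpa using (hconv c rfl).tendsto_atTop_zero.norm
  obtain ⟨m, hm⟩ := eventually_atTop.mp (hterm.eventually (ge_mem_nhds hε))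
  obtain ⟨ℓ, hℓ, hℓ1⟩ := IsUltrametricDist.exists_lt_and_norm_natCast_eq_one (K := K) (max n m)
  have : NeZero (ℓ : K) := ⟨fun h => by simp [h] at hℓ1⟩
  obtain ⟨ζ, hζ⟩ := HasEnoughRootsOfUnity.exists_primitiveRoot K ℓ
  have hζ1 : ‖ζ‖ = 1 := norm_eq_one_of_pow_eq_one hζ.pow_eq_one (by omega)
  refine hζ.norm_mul_pow_le_of_norm_sum_range_le hℓ1 (by omega) a c fun j _ => ?_
  have hz : ‖c * ζ ^ j‖ = ‖c‖ := by rw [norm_mul, norm_pow, hζ1, one_pow, mul_one]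
  have htail : ‖∑' i, a (i + ℓ) * (c * ζ ^ j) ^ (i + ℓ)‖ ≤ ε := by
    refine IsUltrametricDist.norm_tsum_le_of_forall_le fun i => ?_
    rw [norm_mul, norm_pow, hz, ← norm_pow, ← norm_mul]
    exact hm _ (by omega)
  calc ‖∑ k ∈ range ℓ, a k * (c * ζ ^ j) ^ k‖
      = ‖(∑ k ∈ range ℓ, a k * (c * ζ ^ j) ^ k + ∑' i, a (i + ℓ) * (c * ζ ^ j) ^ (i + ℓ))
          - ∑' i, a (i + ℓ) * (c * ζ ^ j) ^ (i + ℓ)‖ := by rw [add_sub_cancel_right]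
    _ ≤ M + ε := by
      rw [(hconv _ hz).sum_add_tsum_nat_add ℓ]
      exact (norm_sub_le _ _).trans (add_le_add (hM _ hz) htail)

end Ultrametric

theorem eq_zero_of_norm_tsum_le_mul_pow {K : Type*} [NontriviallyNormedField K]
    [IsUltrametricDist K] [IsAlgClosed K] {a : ℕ → K}
    (hconv : ∀ z, Summable fun k => a k * z ^ k) {C R : ℝ} {N : ℕ}
    (hgrow : ∀ z, R ≤ ‖z‖ → ‖∑' k, a k * z ^ k‖ ≤ C * ‖z‖ ^ N) {n : ℕ} (hn : N < n) :
    a n = 0 := by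
  by_contra han
  have ha : 0 < ‖a n‖ := norm_pos_iff.mpr han
  obtain ⟨c, hc⟩ := NormedField.exists_lt_norm K (max (max R 1) (C / ‖a n‖))
  have hR : R ≤ ‖c‖ := by grind
  have hc1 : 1 ≤ ‖c‖ := by grind
  have hC : C < ‖a n‖ * ‖c‖ := by
    rw [← div_lt_iff₀' ha]
    exact (le_max_right _ _).trans_lt hc
  have hcauchy : ‖a n‖ * ‖c‖ ^ n ≤ C * ‖c‖ ^ N :=
    norm_mul_pow_le_of_norm_tsum_le (fun z _ => hconv z)
      (fun z hz => hz ▸ hgrow z (hz ▸ hR)) n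
  have : C * ‖c‖ ^ N < ‖a n‖ * ‖c‖ ^ n :=
    calc C * ‖c‖ ^ N < ‖a n‖ * ‖c‖ * ‖c‖ ^ N := by gcongr
      _ = ‖a n‖ * ‖c‖ ^ (N + 1) := by ring
      _ ≤ ‖a n‖ * ‖c‖ ^ n := by gcongr; exact hn
  linarith

section Growth

variable {K : Type*} [NormedField K]

theorem Polynomial.norm_eval_le_mul_pow {p : K[X]} {N : ℕ} (hp : p.natDegree ≤ N) {z : K}
    (hz : 1 ≤ ‖z‖) : ‖p.eval z‖ ≤ (∑ i ∈ range (N + 1), ‖p.coeff i‖) * ‖z‖ ^ N := by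
  rw [eval_eq_sum_range' (Nat.lt_succ_of_le hp), sum_mul]
  refine (norm_sum_le _ _).trans (sum_le_sum fun i hi => ?_)
  rw [norm_mul, norm_pow]
  gcongr
  exact Nat.lt_succ_iff.mp (mem_range.mp hi)

theorem Polynomial.exists_pos_le_norm_eval {p : K[X]} (hp : p ≠ 0) :
    ∃ L > 0, ∃ R, ∀ z : K, R ≤ ‖z‖ → L ≤ ‖p.eval z‖ := by
  rcases (zero_le_degree_iff.mpr hp).eq_or_lt with h | h
  · rw [eq_C_of_degree_eq_zero h.symm] at hp ⊢
    exact ⟨‖p.coeff 0‖, by simpa using hp, 0, fun z _ => by simp⟩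
  · have := p.tendsto_norm_atTop h (tendsto_comap : Tendsto norm (comap norm atTop) atTop)
    obtain ⟨R, -, hR⟩ := (atTop_basis.comap _).eventually_iff.mp (this.eventually_ge_atTop 1)
    exact ⟨1, one_pos, R, fun z hz => hR hz⟩

theorem Polynomial.cauchyBound_le {p : K[X]} {L M : ℝ} (hL : 0 < L) (hM : 0 ≤ M)
    (hlead : L ≤ ‖p.leadingCoeff‖) (hcoeff : ∀ i < p.natDegree, ‖p.coeff i‖ ≤ M) :
    (cauchyBound p : ℝ) ≤ M / L + 1 := by
  have hsup : (range p.natDegree).sup (‖p.coeff ·‖₊) ≤ ⟨M, hM⟩ :=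
    Finset.sup_le fun i hi => hcoeff i (mem_range.mp hi)
  rw [cauchyBound, NNReal.coe_add, NNReal.coe_div, coe_nnnorm, NNReal.coe_one]
  gcongr
  exact hsup

theorem exists_norm_le_mul_pow_of_evalEval_eq_zero {q : K[X][Y]} (hq : q ≠ 0) {f : K → K}
    (hf : ∀ z, q.evalEval z (f z) = 0) :
    ∃ C R : ℝ, ∃ N : ℕ, ∀ z, R ≤ ‖z‖ → ‖f z‖ ≤ C * ‖z‖ ^ N := by
  obtain ⟨L, hL, R, hlead⟩ := exists_pos_le_norm_eval (leadingCoeff_ne_zero.mpr hq)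
  set d := q.natDegree
  set N := (range d).sup fun i => (q.coeff i).natDegree
  set B := ∑ i ∈ range d, ∑ j ∈ range (N + 1), ‖(q.coeff i).coeff j‖
  refine ⟨B / L + 1, max R 1, N, fun z hz => ?_⟩
  have hz1 : 1 ≤ ‖z‖ := le_of_max_le_right hz
  have hlz : L ≤ ‖q.leadingCoeff.eval z‖ := hlead z (le_of_max_le_left hz)
  have hlz0 : evalRingHom z q.leadingCoeff ≠ 0 := norm_pos_iff.mp (hL.trans_le hlz)
  set p := q.map (evalRingHom z)
  have hdeg : p.natDegree = d := natDegree_map_of_leadingCoeff_ne_zero _ hlz0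
  have hplead : p.leadingCoeff = q.leadingCoeff.eval z :=
    leadingCoeff_map_of_leadingCoeff_ne_zero _ hlz0
  have hp0 : p ≠ 0 := fun h => hlz0 (by rw [coe_evalRingHom, ← hplead, h, leadingCoeff_zero])
  have hroot : p.IsRoot (f z) := by rw [IsRoot, map_evalRingHom_eval]; exact hf z
  have hcoeff : ∀ i < p.natDegree, ‖p.coeff i‖ ≤ B * ‖z‖ ^ N := fun i hi => by
    have hi : i ∈ range d := mem_range.mpr (hdeg ▸ hi)
    rw [coeff_map, coe_evalRingHom]
    calc ‖(q.coeff i).eval z‖ ≤ (∑ j ∈ range (N + 1), ‖(q.coeff i).coeff j‖) * ‖z‖ ^ N :=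
          norm_eval_le_mul_pow (le_sup (f := fun i => (q.coeff i).natDegree) hi) hz1
      _ ≤ B * ‖z‖ ^ N := by
          gcongr
          exact single_le_sum
            (fun i _ => sum_nonneg fun j _ => norm_nonneg ((q.coeff i).coeff j)) hi
  calc ‖f z‖ ≤ cauchyBound p := (hroot.norm_lt_cauchyBound hp0).le
    _ ≤ B * ‖z‖ ^ N / L + 1 := cauchyBound_le hL (by positivity) (hplead ▸ hlz) hcoeff
    _ ≤ (B / L + 1) * ‖z‖ ^ N := by
        rw [add_mul, one_mul, mul_div_right_comm]
        gcongr
        exact one_le_pow₀ hz1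

end Growth

theorem Polynomial.Bivariate.evalEval_eq_eval_equivMvPolynomial {R : Type*} [CommSemiring R]
    (q : R[X][Y]) (x y : R) :
    q.evalEval x y = MvPolynomial.eval ![x, y] (equivMvPolynomial R q) := by
  have : (MvPolynomial.aeval ![x, y]).comp (equivMvPolynomial R).toAlgHom = aevalAeval x y := by
    ext <;> simp
  rw [← coe_aevalAeval_eq_evalEval, ← this, ← MvPolynomial.coe_aeval_eq_eval]
  rfl

theorem entire_algebraic_iff_polynomial_general
    (Cp : Type) [NontriviallyNormedField Cp] [IsUltrametricDist Cp] [IsAlgClosed Cp]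
    (a : ℕ → Cp) (hconv : ∀ z : Cp, Summable fun n => a n * z ^ n)
    (F : Cp → Cp) (hF : ∀ z : Cp, F z = ∑' n, a n * z ^ n) :
    (∃ P : MvPolynomial (Fin 2) Cp, P ≠ 0 ∧ ∀ z : Cp, MvPolynomial.eval ![z, F z] P = 0)
      ↔ ∃ Q : Polynomial Cp, ∀ z : Cp, F z = Q.eval z := by
  constructor
  · rintro ⟨P, hP0, hPF⟩
    obtain ⟨A, R, N, hgrow⟩ := exists_norm_le_mul_pow_of_evalEval_eq_zero (f := F)
      ((map_ne_zero_iff _ (AlgEquiv.injective _)).mpr hP0) fun z => by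
        rw [Bivariate.evalEval_eq_eval_equivMvPolynomial, AlgEquiv.apply_symm_apply, hPF]
    have hvanish : ∀ n, N < n → a n = 0 := fun n hn =>
      eq_zero_of_norm_tsum_le_mul_pow hconv (fun z hz => hF z ▸ hgrow z hz) hn
    refine ⟨∑ k ∈ range (N + 1), C (a k) * X ^ k, fun z => ?_⟩
    rw [hF, tsum_eq_sum (s := range (N + 1)) fun k hk => by
      rw [hvanish k (by simpa using hk), zero_mul]]
    simp [eval_finsetSum]
  · rintro ⟨Q, hQ⟩
    refine ⟨Bivariate.equivMvPolynomial Cp (X - C Q),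
      (map_ne_zero_iff _ (AlgEquiv.injective _)).mpr (X_sub_C_ne_zero Q), fun z => ?_⟩
    rw [← Bivariate.evalEval_eq_eval_equivMvPolynomial]
    simp [hQ, evalEval_C]

/-- A p-adic entire function `f : ℂ_p → ℂ_p` (given by an everywhere-convergent power
series) is algebraic over `ℂ_p[z]` if and only if it is a polynomial function. -/
theorem entire_algebraic_iff_polynomial {p : ℕ} [Fact p.Prime]
    (Cp : Type) [NontriviallyNormedField Cp] [IsUltrametricDist Cp] [CompleteSpace Cp]
    [IsAlgClosed Cp] [CharZero Cp] [Algebra ℚ_[p] Cp]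
    (hisom : ∀ x : ℚ_[p], ‖algebraMap ℚ_[p] Cp x‖ = ‖x‖)
    (hdense : Dense {x : Cp | IsAlgebraic ℚ_[p] x})
    (a : ℕ → Cp) (hconv : ∀ z : Cp, Summable fun n => a n * z ^ n)
    (F : Cp → Cp) (hF : ∀ z : Cp, F z = ∑' n, a n * z ^ n) :
    (∃ P : MvPolynomial (Fin 2) Cp, P ≠ 0 ∧ ∀ z : Cp, MvPolynomial.eval ![z, F z] P = 0)
      ↔ ∃ Q : Polynomial Cp, ∀ z : Cp, F z = Q.eval z :=
  entire_algebraic_iff_polynomial_general Cp a hconv F hF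
end

section
/- A p-adic entire function f : ℂ_p → ℂ_p with only finitely many zeros is a polynomial function. -/
/-!
Call `N` the dominant index of `a` at radius `r` if `‖a N‖ * r ^ N` strictly exceeds every other
`‖a n‖ * r ^ n`. Over an ultrametric field dominant indices add up under multiplication of
polynomials, so a split polynomial without roots on the sphere `‖z‖ = r` has as dominant index
the number of its roots in the disc `‖z‖ < r`, and its value at a point `z` of that disc has norm
`‖p_N‖ * ∏ ‖z - α‖` over those roots.

If infinitely many `aₙ` are nonzero, the dominant index tends to infinity with `r`, so there are
radii `ρ < r`, both avoiding the countably many radii where two terms tie, with different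
dominant indices `M ≠ N`. Then no long partial sum can have all its `N` roots of norm `< r` inside
the disc of radius `ρ`, so it has a root of norm between `ρ` and `r`. Passing from a root of one
partial sum to the nearest root of the next one moves by at most `(‖aₖ‖ rᵏ / ‖a_N‖)^(1/N) → 0`,
so by completeness these roots converge, without changing their norm, to a zero of the series.
Thus the zeros of an entire function that is not a polynomial are unbounded.
-/

open Polynomial Filter Topology Metric

theorem IsUltrametricDist.norm_add_eq_of_norm_lt {E : Type*} [SeminormedAddGroup E]
    [IsUltrametricDist E] {x y : E} (h : ‖x‖ < ‖y‖) : ‖x + y‖ = ‖y‖ := by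
  rw [IsUltrametricDist.norm_add_eq_max_of_norm_ne_norm h.ne, max_eq_right h.le]

theorem IsUltrametricDist.exists_tendsto_mem_ball {E : Type*} [NormedAddCommGroup E]
    [IsUltrametricDist E] [CompleteSpace E] {z : ℕ → E} {ρ : ℝ}
    (hz : Tendsto (fun i => z (i + 1) - z i) atTop (𝓝 0)) (hρ : ∀ i, ‖z (i + 1) - z i‖ < ρ) :
    ∃ L ∈ ball (z 0) ρ, Tendsto z atTop (𝓝 L) := by
  obtain ⟨L, hL⟩ :=
    cauchySeq_tendsto_of_complete (NonarchimedeanAddGroup.cauchySeq_of_tendsto_sub_nhds_zero hz)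
  have hmem (i : ℕ) : z i ∈ ball (z 0) ρ := by
    induction i with
    | zero => exact mem_ball_self ((norm_nonneg _).trans_lt (hρ 0))
    | succ i ih =>
      rw [IsUltrametricDist.ball_eq_of_mem ih, mem_ball, dist_eq_norm]
      exact hρ i
  exact ⟨L, (IsUltrametricDist.isClosed_ball _ _).mem_of_tendsto hL (.of_forall hmem), hL⟩

theorem exists_seq_of_forall_exists_succ {α : Type*} {p : ℕ → α → Prop} {q : ℕ → α → α → Prop}
    {x₀ : α} (h₀ : p 0 x₀) (h : ∀ i x, p i x → ∃ y, p (i + 1) y ∧ q i x y) :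
    ∃ z : ℕ → α, z 0 = x₀ ∧ ∀ i, p i (z i) ∧ q i (z i) (z (i + 1)) := by
  choose! g hg using h
  let z : ℕ → α := fun i => Nat.rec x₀ (fun i x => g i x) i
  have hz (i : ℕ) : p i (z i) := by
    induction i with
    | zero => exact h₀
    | succ i ih => exact (hg i _ ih).1
  exact ⟨z, rfl, fun i => ⟨hz i, (hg i _ (hz i)).2⟩⟩

theorem exists_forall_le_of_tendsto_zero {u : ℕ → ℝ} (hu : Tendsto u atTop (𝓝 0)) {n₀ : ℕ}
    (h : 0 < u n₀) : ∃ N, ∀ n, u n ≤ u N := by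
  have hsmall : ∀ᶠ n in cofinite, u n < u n₀ :=
    Nat.cofinite_eq_atTop ▸ hu.eventually (gt_mem_nhds h)
  have hfin : {n | u n₀ ≤ u n}.Finite := by
    simpa only [not_lt] using eventually_cofinite.1 hsmall
  obtain ⟨N, hN, hmax⟩ := Set.exists_max_image _ u hfin ⟨n₀, le_refl (u n₀)⟩
  exact ⟨N, fun n => (le_or_gt (u n₀) (u n)).elim (hmax n) fun hn => hn.le.trans hN⟩

def IsDominantIndex {K : Type*} [Norm K] (a : ℕ → K) (r : ℝ) (N : ℕ) : Prop :=
  ∀ n ≠ N, ‖a n‖ * r ^ n < ‖a N‖ * r ^ N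

namespace IsDominantIndex

variable {K : Type*} [NormedField K] {a : ℕ → K} {r : ℝ} {N M : ℕ}

theorem le (h : IsDominantIndex a r N) (n : ℕ) : ‖a n‖ * r ^ n ≤ ‖a N‖ * r ^ N := by
  rcases eq_or_ne n N with rfl | hn
  · exact le_rfl
  · exact (h n hn).le

theorem unique (h : IsDominantIndex a r N) (h' : IsDominantIndex a r M) : N = M :=
  by_contra fun hNM => lt_asymm (h M (Ne.symm hNM)) (h' N hNM)

theorem pos (h : IsDominantIndex a r N) (hr : 0 ≤ r) : 0 < ‖a N‖ * r ^ N :=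
  (by positivity : 0 ≤ ‖a (N + 1)‖ * r ^ (N + 1)).trans_lt (h _ N.succ_ne_self)

theorem ne_zero (h : IsDominantIndex a r N) (hr : 0 ≤ r) : a N ≠ 0 := by
  intro h0
  simpa [h0] using h.pos hr

variable {p q : K[X]} {i j : ℕ}

theorem polynomial_ne_zero (h : IsDominantIndex p.coeff r N) (hr : 0 ≤ r) : p ≠ 0 := by
  rintro rfl
  exact h.ne_zero hr (coeff_zero N)

theorem norm_coeff_mul_lt (hp : IsDominantIndex p.coeff r i) (hq : IsDominantIndex q.coeff r j)
    (hr : 0 < r) {x y : ℕ} (hxy : (x, y) ≠ (i, j)) :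
    ‖p.coeff x * q.coeff y‖ * r ^ (x + y) < ‖p.coeff i‖ * ‖q.coeff j‖ * r ^ (i + j) := by
  calc ‖p.coeff x * q.coeff y‖ * r ^ (x + y)
      = (‖p.coeff x‖ * r ^ x) * (‖q.coeff y‖ * r ^ y) := by rw [norm_mul, pow_add]; ring
    _ < (‖p.coeff i‖ * r ^ i) * (‖q.coeff j‖ * r ^ j) := by
      rcases eq_or_ne x i with rfl | hx
      · exact mul_lt_mul_of_pos_left (hq y fun hy => hxy (by rw [hy])) (hp.pos hr.le)
      · calc (‖p.coeff x‖ * r ^ x) * (‖q.coeff y‖ * r ^ y)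
            ≤ (‖p.coeff x‖ * r ^ x) * (‖q.coeff j‖ * r ^ j) :=
              mul_le_mul_of_nonneg_left (hq.le y) (by positivity)
          _ < _ := mul_lt_mul_of_pos_right (hp x hx) (hq.pos hr.le)
    _ = ‖p.coeff i‖ * ‖q.coeff j‖ * r ^ (i + j) := by rw [pow_add]; ring

variable [IsUltrametricDist K]

theorem norm_eval (h : IsDominantIndex p.coeff r N) {z : K} (hz : ‖z‖ = r) :
    ‖p.eval z‖ = ‖p.coeff N‖ * r ^ N := by
  have hdeg : p.natDegree < max p.natDegree N + 1 := by omega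
  rw [eval_eq_sum_range' hdeg, IsNonarchimedean.apply_sum_eq_of_lt
    IsUltrametricDist.isNonarchimedean_norm (fun x => (norm_neg x).symm) (k := N)
    (Finset.mem_range.2 (by omega)), norm_mul, norm_pow, hz]
  intro n _ hn
  simpa only [norm_mul, norm_pow, hz] using h n hn

theorem norm_coeff_mul (hp : IsDominantIndex p.coeff r i) (hq : IsDominantIndex q.coeff r j)
    (hr : 0 < r) : ‖(p * q).coeff (i + j)‖ = ‖p.coeff i‖ * ‖q.coeff j‖ := by
  rw [coeff_mul, IsNonarchimedean.apply_sum_eq_of_lt IsUltrametricDist.isNonarchimedean_norm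
    (fun x => (norm_neg x).symm) (k := (i, j)) (by simp), norm_mul]
  rintro ⟨x, y⟩ hxy hne
  have hlt := norm_coeff_mul_lt hp hq hr hne
  rw [Finset.HasAntidiagonal.mem_antidiagonal.1 hxy, ← norm_mul] at hlt
  exact lt_of_mul_lt_mul_right hlt (by positivity)

theorem mul (hp : IsDominantIndex p.coeff r i) (hq : IsDominantIndex q.coeff r j) (hr : 0 < r) :
    IsDominantIndex (p * q).coeff r (i + j) := by
  intro n hn
  obtain ⟨⟨x, y⟩, hxy, hle⟩ := IsUltrametricDist.exists_norm_finsetSum_le_of_nonempty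
    (t := Finset.HasAntidiagonal.antidiagonal n) ⟨(0, n), by simp⟩
    fun x => p.coeff x.1 * q.coeff x.2
  rw [Finset.HasAntidiagonal.mem_antidiagonal] at hxy
  simp only at hxy hle
  rw [norm_coeff_mul hp hq hr]
  calc ‖(p * q).coeff n‖ * r ^ n ≤ ‖p.coeff x * q.coeff y‖ * r ^ (x + y) := by
        rw [coeff_mul, hxy]; gcongr
    _ < ‖p.coeff i‖ * ‖q.coeff j‖ * r ^ (i + j) :=
      norm_coeff_mul_lt hp hq hr fun h => hn (by simp_all)

theorem multiset_prod {ι : Type*} {s : Multiset ι} {f : ι → K[X]} {d : ι → ℕ} (hr : 0 < r)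
    (h : ∀ x ∈ s, IsDominantIndex (f x).coeff r (d x)) :
    IsDominantIndex (s.map f).prod.coeff r (s.map d).sum ∧
      ‖(s.map f).prod.coeff (s.map d).sum‖ = (s.map fun x => ‖(f x).coeff (d x)‖).prod := by
  induction s using Multiset.induction_on with
  | empty =>
    refine ⟨fun n hn => ?_, by simp⟩
    simp_all [coeff_one]
  | cons x s ih =>
    obtain ⟨hs, hs'⟩ := ih fun y hy => h y (Multiset.mem_cons_of_mem hy)
    have hx := h x (Multiset.mem_cons_self x s)
    simp only [Multiset.map_cons, Multiset.prod_cons, Multiset.sum_cons]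
    exact ⟨hx.mul hs hr, by rw [hx.norm_coeff_mul hs hr, hs']⟩

end IsDominantIndex

section Roots

variable {K : Type*} [NormedField K] {r : ℝ} {N : ℕ}

theorem isDominantIndex_C {c : K} (hc : c ≠ 0) : IsDominantIndex (C c).coeff r 0 := by
  intro n hn
  simpa [coeff_C, hn] using hc

theorem isDominantIndex_X_sub_C_of_norm_lt {α : K} (h : ‖α‖ < r) :
    IsDominantIndex (X - C α).coeff r 1 := by
  have hr : 0 < r := (norm_nonneg α).trans_lt h
  rintro (_ | _ | n) hn
  · simpa using h
  · exact absurd rfl hn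
  · simp [coeff_X, hr]

theorem isDominantIndex_X_sub_C_of_lt_norm {α : K} (hr : 0 ≤ r) (h : r < ‖α‖) :
    IsDominantIndex (X - C α).coeff r 0 := by
  have hα : 0 < ‖α‖ := hr.trans_lt h
  rintro (_ | _ | n) hn
  · exact absurd rfl hn
  · simpa using h
  · simp [coeff_X, coeff_C, hα]

theorem Multiset.filter_norm_lt_add_filter_lt_norm {s : Multiset K}
    (hs : ∀ α ∈ s, ‖α‖ ≠ r) : s.filter (‖·‖ < r) + s.filter (r < ‖·‖) = s := by
  conv_rhs => rw [← Multiset.filter_add_not (‖·‖ < r) s]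
  congr 1
  exact Multiset.filter_congr fun α hα =>
    ⟨fun h => not_lt.2 h.le, fun h => lt_of_le_of_ne (not_lt.1 h) (hs α hα).symm⟩

variable [IsUltrametricDist K] {p : K[X]}

theorem isDominantIndex_card_roots_lt (hp : p.Splits) (hp0 : p ≠ 0) (hr : 0 < r)
    (hroots : ∀ α ∈ p.roots, ‖α‖ ≠ r) :
    IsDominantIndex p.coeff r (p.roots.filter (‖·‖ < r)).card ∧
      ‖p.coeff (p.roots.filter (‖·‖ < r)).card‖ =
        ‖p.leadingCoeff‖ * ((p.roots.filter (r < ‖·‖)).map (‖·‖)).prod := by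
  obtain ⟨hin, hin'⟩ := IsDominantIndex.multiset_prod (s := p.roots.filter (‖·‖ < r))
    (f := fun α => X - C α) (d := fun _ => 1) hr
    fun α hα => isDominantIndex_X_sub_C_of_norm_lt (Multiset.mem_filter.1 hα).2
  obtain ⟨hout, hout'⟩ := IsDominantIndex.multiset_prod (s := p.roots.filter (r < ‖·‖))
    (f := fun α => X - C α) (d := fun _ => 0) hr
    fun α hα => isDominantIndex_X_sub_C_of_lt_norm hr.le (Multiset.mem_filter.1 hα).2
  have hc := isDominantIndex_C (r := r) (leadingCoeff_ne_zero.2 hp0)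
  have hp_eq : p = C p.leadingCoeff * ((p.roots.filter (r < ‖·‖)).map (X - C ·)).prod *
      ((p.roots.filter (‖·‖ < r)).map (X - C ·)).prod := by
    conv_lhs => rw [hp.eq_prod_roots, ← Multiset.filter_norm_lt_add_filter_lt_norm hroots]
    rw [Multiset.map_add, Multiset.prod_add]
    ring
  simp only [Multiset.map_const', Multiset.sum_replicate, smul_eq_mul, mul_one, mul_zero]
    at hin hin' hout hout'
  have hdom := (hc.mul hout hr).mul hin hr
  have hnorm := (hc.mul hout hr).norm_coeff_mul hin hr
  rw [hc.norm_coeff_mul hout hr] at hnorm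
  simp only [zero_add] at hdom hnorm
  rw [← hp_eq] at hdom hnorm
  refine ⟨hdom, ?_⟩
  rw [hnorm, hout', hin']
  simp

theorem norm_eval_eq_mul_prod_roots (hp : p.Splits) (hroots : ∀ α ∈ p.roots, ‖α‖ ≠ r) {z : K}
    (hz : ‖z‖ < r) :
    ‖p.eval z‖ = ‖p.leadingCoeff‖ * ((p.roots.filter (r < ‖·‖)).map (‖·‖)).prod *
      ((p.roots.filter (‖·‖ < r)).map (‖z - ·‖)).prod := by
  conv_lhs => rw [hp.eq_prod_roots, ← Multiset.filter_norm_lt_add_filter_lt_norm hroots]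
  have hprod (s : Multiset K) : ‖s.prod‖ = (s.map (‖·‖)).prod := map_multiset_prod normHom s
  simp only [eval_mul, eval_C, eval_multiset_prod, eval_sub, eval_X, Multiset.map_add,
    Multiset.prod_add, norm_mul, hprod, Multiset.map_map, Function.comp_def]
  have hout : ∀ α ∈ p.roots.filter (r < ‖·‖), ‖z - α‖ = ‖α‖ := fun α hα => by
    have hzα : ‖z‖ < ‖-α‖ := (norm_neg α).symm ▸ hz.trans (Multiset.mem_filter.1 hα).2
    rw [sub_eq_add_neg, IsUltrametricDist.norm_add_eq_of_norm_lt hzα, norm_neg]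
  rw [Multiset.map_congr rfl hout]
  ring

namespace IsDominantIndex

theorem norm_ne_of_mem_roots (h : IsDominantIndex p.coeff r N) (hr : 0 ≤ r) {α : K}
    (hα : α ∈ p.roots) : ‖α‖ ≠ r := by
  intro hαr
  have h0 := h.norm_eval hαr
  rw [(mem_roots'.1 hα).2.eq_zero, norm_zero] at h0
  exact (h.pos hr).ne h0

variable (hp : p.Splits)
include hp

theorem card_roots_lt (h : IsDominantIndex p.coeff r N) (hr : 0 < r) :
    (p.roots.filter (‖·‖ < r)).card = N :=
  (isDominantIndex_card_roots_lt hp (h.polynomial_ne_zero hr.le) hr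
    fun _ hα => h.norm_ne_of_mem_roots hr.le hα).1.unique h

theorem norm_eval_of_norm_lt (h : IsDominantIndex p.coeff r N) (hr : 0 < r) {z : K}
    (hz : ‖z‖ < r) :
    ‖p.eval z‖ = ‖p.coeff N‖ * ((p.roots.filter (‖·‖ < r)).map (‖z - ·‖)).prod := by
  have hroots : ∀ α ∈ p.roots, ‖α‖ ≠ r := fun _ hα => h.norm_ne_of_mem_roots hr.le hα
  rw [norm_eval_eq_mul_prod_roots hp hroots hz, ← h.card_roots_lt hp hr,
    (isDominantIndex_card_roots_lt hp (h.polynomial_ne_zero hr.le) hr hroots).2]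

theorem exists_root_norm_sub_pow_le (h : IsDominantIndex p.coeff r N) (hr : 0 < r) (hN : N ≠ 0)
    {z : K} (hz : ‖z‖ < r) :
    ∃ w ∈ p.roots, ‖w‖ < r ∧ ‖p.coeff N‖ * ‖z - w‖ ^ N ≤ ‖p.eval z‖ := by
  classical
  set s := p.roots.filter (‖·‖ < r)
  have hcard : s.card = N := h.card_roots_lt hp hr
  obtain ⟨w, hw, hmin⟩ := s.toFinset.exists_min_image (‖z - ·‖)
    (Multiset.toFinset_nonempty.2 (Multiset.card_pos.1 (by omega)))
  rw [Multiset.mem_toFinset, Multiset.mem_filter] at hw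
  refine ⟨w, hw.1, hw.2, ?_⟩
  rw [h.norm_eval_of_norm_lt hp hr hz, ← hcard]
  gcongr
  calc ‖z - w‖ ^ s.card = (s.map fun _ => ‖z - w‖).prod := by simp
    _ ≤ (s.map (‖z - ·‖)).prod := Multiset.prod_map_le_prod_map₀ _ _
        (fun _ _ => norm_nonneg _) fun α hα => hmin α (Multiset.mem_toFinset.2 hα)

theorem exists_root_norm_mem_Ioo (h : IsDominantIndex p.coeff r N) {R ρ : ℝ}
    (h' : ¬IsDominantIndex p.coeff ρ N) (hρ : 0 < ρ) (hRρ : R < ρ) (hρr : ρ < r) :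
    ∃ w ∈ p.roots, R < ‖w‖ ∧ ‖w‖ < r := by
  by_contra! hcon
  have hr := hρ.trans hρr
  have hroots : ∀ α ∈ p.roots, ‖α‖ ≠ ρ := fun α hα hαρ =>
    (hcon α hα (hαρ ▸ hRρ)).not_gt (hαρ ▸ hρr)
  have hsame : p.roots.filter (‖·‖ < ρ) = p.roots.filter (‖·‖ < r) :=
    Multiset.filter_congr fun α hα => ⟨fun hαρ => hαρ.trans hρr,
      fun hαr => (not_lt.1 fun hRα => (hcon α hα hRα).not_gt hαr).trans_lt hRρ⟩
  apply h'
  have := (isDominantIndex_card_roots_lt hp (h.polynomial_ne_zero hr.le) hρ hroots).1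
  rwa [hsame, h.card_roots_lt hp hr] at this

end IsDominantIndex

end Roots

section PowerSeries

open PowerSeries

theorem eval_trunc_mk {R : Type*} [CommSemiring R] (a : ℕ → R) (k : ℕ) (z : R) :
    (trunc k (mk a)).eval z = ∑ n ∈ Finset.range k, a n * z ^ n := by
  simp [eval, eval₂_trunc_eq_sum_range]

theorem exists_polynomial_eq_tsum_of_eventually_eq_zero {R : Type*} [CommSemiring R]
    [TopologicalSpace R] {a : ℕ → R} (h : ∀ᶠ n in atTop, a n = 0) :
    ∃ Q : R[X], ∀ z, ∑' n, a n * z ^ n = Q.eval z := by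
  obtain ⟨k, hk⟩ := eventually_atTop.1 h
  refine ⟨trunc k (mk a), fun z => ?_⟩
  rw [eval_trunc_mk, tsum_eq_sum fun n hn => ?_]
  rw [hk n (by simpa using hn), zero_mul]

variable {K : Type*} [NontriviallyNormedField K] {a : ℕ → K}

theorem IsDominantIndex.trunc {r : ℝ} {N : ℕ} (h : IsDominantIndex a r N) (hr : 0 ≤ r) {k : ℕ}
    (hk : N < k) : IsDominantIndex (trunc k (mk a)).coeff r N := by
  intro n hn
  rw [coeff_trunc, coeff_trunc, if_pos hk, coeff_mk, coeff_mk]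
  split_ifs
  · exact h n hn
  · simpa using h.pos hr

theorem tendsto_norm_mul_pow_of_summable (ha : ∀ z : K, Summable fun n => a n * z ^ n) (r : ℝ) :
    Tendsto (fun n => ‖a n‖ * r ^ n) atTop (𝓝 0) := by
  obtain ⟨z, hz⟩ := NormedField.exists_lt_norm K |r|
  refine squeeze_zero_norm (fun n => ?_) (by simpa using (ha z).tendsto_atTop_zero.norm)
  rw [Real.norm_eq_abs, abs_mul, abs_norm, abs_pow]
  exact mul_le_mul_of_nonneg_left (pow_le_pow_left₀ (abs_nonneg r) hz.le n) (norm_nonneg _)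

theorem eventually_le_of_isDominantIndex {m : ℕ} (hm : a m ≠ 0) :
    ∀ᶠ r in atTop, ∀ N, IsDominantIndex a r N → m ≤ N := by
  have hm' : 0 < ‖a m‖ := norm_pos_iff.2 hm
  have hlt : ∀ i ∈ Finset.range m, ∀ᶠ r in atTop, ‖a i‖ * r ^ i < ‖a m‖ * r ^ m := by
    intro i hi
    filter_upwards [eventually_ge_atTop 1, eventually_gt_atTop (‖a i‖ / ‖a m‖)] with r hr1 hr
    have hr0 : 0 < r := zero_lt_one.trans_le hr1
    calc ‖a i‖ * r ^ i < ‖a m‖ * r * r ^ i := by gcongr; exact (div_lt_iff₀' hm').1 hr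
      _ = ‖a m‖ * r ^ (i + 1) := by ring
      _ ≤ ‖a m‖ * r ^ m := by gcongr; exact Finset.mem_range.1 hi
  filter_upwards [(eventually_all_finset _).2 hlt] with r hr N hN
  by_contra! hNm
  exact (hr N (Finset.mem_range.2 hNm)).not_gt (hN m hNm.ne')

theorem countable_setOf_norm_mul_pow_eq (a : ℕ → K) :
    {r : ℝ | 0 < r ∧ ∃ i j, i ≠ j ∧ a i ≠ 0 ∧ a j ≠ 0 ∧
      ‖a i‖ * r ^ i = ‖a j‖ * r ^ j}.Countable := by
  -- for `i < j` the equation says `‖a i‖ = ‖a j‖ * r ^ (j - i)`, which has at most one root `r > 0`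
  have key : ∀ i j, i < j → a j ≠ 0 → ∀ x y : ℝ, 0 < x → 0 < y →
      ‖a i‖ * x ^ i = ‖a j‖ * x ^ j → ‖a i‖ * y ^ i = ‖a j‖ * y ^ j → x = y := by
    intro i j hij hj x y hx hy hxe hye
    have hsolve (s : ℝ) (hs : 0 < s) (hse : ‖a i‖ * s ^ i = ‖a j‖ * s ^ j) :
        ‖a i‖ = ‖a j‖ * s ^ (j - i) := by
      refine mul_right_cancel₀ (pow_pos hs i).ne' ?_
      rw [hse, mul_assoc, ← pow_add, Nat.sub_add_cancel hij.le]
    refine (pow_left_inj₀ hx.le hy.le (Nat.sub_ne_zero_of_lt hij)).1 ?_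
    exact mul_left_cancel₀ (norm_ne_zero_iff.2 hj) ((hsolve x hx hxe).symm.trans (hsolve y hy hye))
  refine (Set.countable_iUnion fun i => Set.countable_iUnion fun j =>
    Set.Subsingleton.countable (s := {r : ℝ | 0 < r ∧ i ≠ j ∧ a i ≠ 0 ∧ a j ≠ 0 ∧
      ‖a i‖ * r ^ i = ‖a j‖ * r ^ j}) ?_).mono ?_
  · rintro x ⟨hx, hij, hi, hj, hxe⟩ y ⟨hy, -, -, -, hye⟩
    rcases hij.lt_or_gt with h | h
    · exact key i j h hj x y hx hy hxe hye
    · exact key j i h hi x y hx hy hxe.symm hye.symm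
  · rintro r ⟨hr, i, j, hij, hi, hj, he⟩
    exact Set.mem_iUnion₂.2 ⟨i, j, hr, hij, hi, hj, he⟩

theorem exists_isDominantIndex_gt (ha : ∀ r, Tendsto (fun n => ‖a n‖ * r ^ n) atTop (𝓝 0))
    (hne : ∃ n, a n ≠ 0) (t : ℝ) : ∃ r > t, ∃ N, IsDominantIndex a r N := by
  obtain ⟨r, hrt, hgen⟩ :=
    ((countable_setOf_norm_mul_pow_eq a).dense_compl ℝ).inter_open_nonempty
      (Set.Ioi (max t 0)) isOpen_Ioi Set.nonempty_Ioi
  have hr : 0 < r := (le_max_right t 0).trans_lt hrt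
  obtain ⟨n₀, hn₀⟩ := hne
  have hn₀pos : 0 < ‖a n₀‖ * r ^ n₀ := mul_pos (norm_pos_iff.2 hn₀) (pow_pos hr n₀)
  obtain ⟨N, hN⟩ := exists_forall_le_of_tendsto_zero (ha r) hn₀pos
  have hNpos : 0 < ‖a N‖ * r ^ N := hn₀pos.trans_le (hN n₀)
  refine ⟨r, (le_max_left t 0).trans_lt hrt, N, fun n hn =>
    (hN n).lt_of_ne fun heq => hgen ⟨hr, n, N, hn, fun h0 => ?_, fun h0 => ?_, heq⟩⟩
  · rw [h0, norm_zero, zero_mul] at heq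
    exact hNpos.ne heq
  · rw [h0, norm_zero, zero_mul] at hNpos
    exact hNpos.false

variable [IsUltrametricDist K]

theorem norm_tsum_sub_eval_trunc_le {z : K} {r ε : ℝ} {k : ℕ}
    (hs : Summable fun n => a n * z ^ n) (hz : ‖z‖ ≤ r) (hε : 0 ≤ ε)
    (h : ∀ n ≥ k, ‖a n‖ * r ^ n ≤ ε) : ‖∑' n, a n * z ^ n - (trunc k (mk a)).eval z‖ ≤ ε := by
  rw [eval_trunc_mk, ← hs.sum_add_tsum_nat_add k, add_sub_cancel_left]
  refine IsUltrametricDist.norm_tsum_le_of_forall_le_of_nonneg hε fun n => ?_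
  rw [norm_mul, norm_pow]
  exact (mul_le_mul_of_nonneg_left (pow_le_pow_left₀ (norm_nonneg z) hz _) (norm_nonneg _)).trans
    (h _ (Nat.le_add_left k n))

theorem tendstoLocallyUniformly_eval_trunc (ha : ∀ z : K, Summable fun n => a n * z ^ n)
    {ι : Type*} {l : Filter ι} {k : ι → ℕ} (hk : Tendsto k l atTop) :
    TendstoLocallyUniformly (fun i z => (trunc (k i) (mk a)).eval z)
      (fun z => ∑' n, a n * z ^ n) l := by
  refine Metric.tendstoLocallyUniformly_iff.2 fun ε hε x =>
    ⟨ball x 1, ball_mem_nhds x one_pos, ?_⟩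
  obtain ⟨n₀, hn₀⟩ := eventually_atTop.1
    ((tendsto_norm_mul_pow_of_summable ha (‖x‖ + 1)).eventually (ge_mem_nhds (half_pos hε)))
  filter_upwards [hk.eventually_ge_atTop n₀] with i hi y hy
  have hy' : ‖y‖ ≤ ‖x‖ + 1 := by
    have := norm_le_norm_add_norm_sub' y x
    rw [← dist_eq_norm] at this
    linarith [mem_ball.1 hy]
  rw [dist_eq_norm]
  exact (norm_tsum_sub_eval_trunc_le (ha y) hy' (half_pos hε).le
    fun n hn => hn₀ n (hi.trans hn)).trans_lt (half_lt_self hε)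

theorem tsum_eq_zero_of_tendsto_root_trunc (ha : ∀ z : K, Summable fun n => a n * z ^ n)
    {k : ℕ → ℕ} (hk : Tendsto k atTop atTop) {z : ℕ → K} {L : K} (hzL : Tendsto z atTop (𝓝 L))
    (hroot : ∀ i, (trunc (k i) (mk a)).eval (z i) = 0) : ∑' n, a n * L ^ n = 0 := by
  have hcont : Continuous fun z => ∑' n, a n * z ^ n :=
    (tendstoLocallyUniformly_eval_trunc ha tendsto_id).continuous
      (.of_forall fun k => (trunc k (mk a)).continuous)
  refine tendsto_nhds_unique
    ((tendstoLocallyUniformly_eval_trunc ha hk).tendsto_comp hcont.continuousAt hzL) ?_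
  simp only [hroot]
  exact tendsto_const_nhds

variable [IsAlgClosed K] {r : ℝ} {N k : ℕ}

theorem exists_root_trunc_succ (hN : IsDominantIndex a r N) (hr : 0 < r) (hN0 : N ≠ 0)
    (hk : N ≤ k) {z : K} (hz : ‖z‖ < r) (hroot : (trunc k (mk a)).eval z = 0) :
    ∃ w, (trunc (k + 1) (mk a)).eval w = 0 ∧ ‖w‖ < r ∧ ‖a N‖ * ‖z - w‖ ^ N ≤ ‖a k‖ * r ^ k := by
  obtain ⟨w, hw, hwr, hle⟩ := (hN.trunc hr.le (Nat.lt_succ_of_le hk)).exists_root_norm_sub_pow_le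
    (IsAlgClosed.splits _) hr hN0 hz
  refine ⟨w, (mem_roots'.1 hw).2, hwr, ?_⟩
  have heval : (trunc (k + 1) (mk a)).eval z = a k * z ^ k := by
    rw [trunc_succ, eval_add, hroot, eval_monomial, coeff_mk, zero_add]
  rw [coeff_trunc, if_pos (Nat.lt_succ_of_le hk), coeff_mk, heval, norm_mul, norm_pow] at hle
  exact hle.trans (by gcongr)

theorem exists_tsum_eq_zero_mem_ball [CompleteSpace K]
    (ha : ∀ z : K, Summable fun n => a n * z ^ n) (hN : IsDominantIndex a r N) (hr : 0 < r)
    (hN0 : N ≠ 0) (hk : N ≤ k) {ρ : ℝ} (hρ : 0 ≤ ρ)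
    (hsmall : ∀ n ≥ k, ‖a n‖ * r ^ n < ‖a N‖ * ρ ^ N) {w : K} (hw : ‖w‖ < r)
    (hroot : (trunc k (mk a)).eval w = 0) : ∃ L ∈ ball w ρ, ∑' n, a n * L ^ n = 0 := by
  obtain ⟨z, rfl, hz⟩ := exists_seq_of_forall_exists_succ
    (p := fun i x => (trunc (k + i) (mk a)).eval x = 0 ∧ ‖x‖ < r)
    (q := fun i x y => ‖a N‖ * ‖x - y‖ ^ N ≤ ‖a (k + i)‖ * r ^ (k + i)) ⟨hroot, hw⟩
    fun i x ⟨hx, hxr⟩ => by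
      obtain ⟨y, hy, hyr, hxy⟩ := exists_root_trunc_succ hN hr hN0 (hk.trans (k.le_add_right i))
        hxr hx
      exact ⟨y, ⟨hy, hyr⟩, hxy⟩
  have hstep (i : ℕ) {ε : ℝ} (hε : 0 ≤ ε) (h : ‖a (k + i)‖ * r ^ (k + i) < ‖a N‖ * ε ^ N) :
      ‖z (i + 1) - z i‖ < ε := by
    rw [norm_sub_rev]
    exact (pow_lt_pow_iff_left₀ (norm_nonneg _) hε hN0).1
      (lt_of_mul_lt_mul_left ((hz i).2.trans_lt h) (norm_nonneg _))
  have haN : 0 < ‖a N‖ := norm_pos_iff.2 (hN.ne_zero hr.le)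
  have hk' : Tendsto (k + ·) atTop atTop := tendsto_atTop_mono (Nat.le_add_left · k) tendsto_id
  have hdiff : Tendsto (fun i => z (i + 1) - z i) atTop (𝓝 0) := by
    refine NormedAddGroup.tendsto_nhds_zero.2 fun ε hε => ?_
    filter_upwards [hk'.eventually ((tendsto_norm_mul_pow_of_summable ha r).eventually
      (gt_mem_nhds (by positivity : 0 < ‖a N‖ * ε ^ N)))] with i hi using hstep i hε.le hi
  obtain ⟨L, hL, hzL⟩ := IsUltrametricDist.exists_tendsto_mem_ball hdiff
    fun i => hstep i hρ (hsmall _ (k.le_add_right i))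
  exact ⟨L, hL, tsum_eq_zero_of_tendsto_root_trunc ha hk' hzL fun i => (hz i).1.1⟩

theorem exists_lt_norm_tsum_eq_zero [CompleteSpace K]
    (ha : ∀ z : K, Summable fun n => a n * z ^ n) (hfreq : ∃ᶠ n in atTop, a n ≠ 0) (R : ℝ) :
    ∃ z, R < ‖z‖ ∧ ∑' n, a n * z ^ n = 0 := by
  have hlim := tendsto_norm_mul_pow_of_summable ha
  set R₀ := max R 1
  have hR₀ : 0 < R₀ := lt_max_of_lt_right one_pos
  obtain ⟨ρ, hR₀ρ, M, hM⟩ := exists_isDominantIndex_gt hlim hfreq.exists R₀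
  obtain ⟨m, hMm, hm⟩ := frequently_atTop.1 hfreq (M + 1)
  obtain ⟨T, hT⟩ := (eventually_le_of_isDominantIndex hm).exists_forall_of_atTop
  obtain ⟨r, hr, N, hN⟩ := exists_isDominantIndex_gt hlim hfreq.exists (max ρ T)
  have hmN := hT r ((le_max_right ρ T).trans hr.le) N hN
  have hρr : ρ < r := (le_max_left ρ T).trans_lt hr
  have hr0 : 0 < r := hR₀.trans (hR₀ρ.trans hρr)
  obtain ⟨k₀, hk₀⟩ := eventually_atTop.1 ((hlim r).eventually
    (gt_mem_nhds (mul_pos (norm_pos_iff.2 (hN.ne_zero hr0.le)) (pow_pos hR₀ N))))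
  set k := max k₀ (N + 1)
  have hPN := hN.trunc hr0.le (show N < k by omega)
  have hPM := hM.trunc (hR₀.trans hR₀ρ).le (show M < k by omega)
  obtain ⟨w, hw, hR₀w, hwr⟩ := hPN.exists_root_norm_mem_Ioo (IsAlgClosed.splits _)
    (fun h => by have := h.unique hPM; omega) (hR₀.trans hR₀ρ) hR₀ρ hρr
  obtain ⟨L, hL, hFL⟩ := exists_tsum_eq_zero_mem_ball ha hN hr0 (by omega) (by omega) hR₀.le
    (fun n hn => hk₀ n (le_of_max_le_left hn)) hwr (mem_roots'.1 hw).2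
  refine ⟨L, ?_, hFL⟩
  have hLw : ‖L - w‖ < ‖w‖ := (mem_ball_iff_norm.1 hL).trans hR₀w
  rw [← sub_add_cancel L w, IsUltrametricDist.norm_add_eq_of_norm_lt hLw]
  exact (le_max_left R 1).trans_lt hR₀w

end PowerSeries

theorem entire_finite_zeros_polynomial_general
    (Cp : Type) [NontriviallyNormedField Cp] [IsUltrametricDist Cp] [CompleteSpace Cp]
    [IsAlgClosed Cp]
    (a : ℕ → Cp) (hconv : ∀ z : Cp, Summable fun n => a n * z ^ n)
    (F : Cp → Cp) (hF : ∀ z : Cp, F z = ∑' n, a n * z ^ n)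
    (hzeros : {z : Cp | F z = 0}.Finite) :
    ∃ Q : Polynomial Cp, ∀ z : Cp, F z = Q.eval z := by
  by_cases h : ∀ᶠ n in atTop, a n = 0
  · obtain ⟨Q, hQ⟩ := exists_polynomial_eq_tsum_of_eventually_eq_zero h
    exact ⟨Q, fun z => (hF z).trans (hQ z)⟩
  · obtain ⟨B, hB⟩ := (hzeros.image (‖·‖)).bddAbove
    obtain ⟨z, hz, hFz⟩ := exists_lt_norm_tsum_eq_zero hconv (not_eventually.1 h) B
    exact absurd (hB ⟨z, (hF z).trans hFz, rfl⟩) (not_le.2 hz)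

/-- A p-adic entire function `f : ℂ_p → ℂ_p` with only finitely many zeros is a
polynomial function. -/
theorem entire_finite_zeros_polynomial {p : ℕ} [Fact p.Prime]
    (Cp : Type) [NontriviallyNormedField Cp] [IsUltrametricDist Cp] [CompleteSpace Cp]
    [IsAlgClosed Cp] [CharZero Cp] [Algebra ℚ_[p] Cp]
    (hisom : ∀ x : ℚ_[p], ‖algebraMap ℚ_[p] Cp x‖ = ‖x‖)
    (hdense : Dense {x : Cp | IsAlgebraic ℚ_[p] x})
    (a : ℕ → Cp) (hconv : ∀ z : Cp, Summable fun n => a n * z ^ n)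
    (F : Cp → Cp) (hF : ∀ z : Cp, F z = ∑' n, a n * z ^ n)
    (hzeros : {z : Cp | F z = 0}.Finite) :
    ∃ Q : Polynomial Cp, ∀ z : Cp, F z = Q.eval z :=
  entire_finite_zeros_polynomial_general Cp a hconv F hF hzeros
end
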